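/- arXiv:1703.03962 — 11 statements merged into one kernel-verified Lean document; each statement's English description precedes it below -/
import Mathlib

section
/- Let R and S be commutative rings with unity, f : R → S a ring homomorphism, and J a proper ideal of S. Then the set of zero-divisors of the amalgamation R ⋈^f J satisfies the inclusion Z(R ⋈^f J) ⊆ {(r, f(r)+j) : r ∈ Z(R), j ∈ J} ∪ {(r, f(r)+j) : r ∈ R, j ∈ J, and there exists j' ∈ J \ {0} with j'(f(r)+j) = 0}. -/
open Pointwise

/-- The amalgamation `R ⋈^f J` of `R` with `S` along the ideal `J` with respect to
`f : R →+* S`, as a subring of `R × S`. -/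
def amalgamation {R S : Type*} [CommRing R] [CommRing S] (f : R →+* S) (J : Ideal S) :
    Subring (R × S) where
  carrier := {p | ∃ j ∈ J, p.2 = f p.1 + j}
  zero_mem' := ⟨0, J.zero_mem, by simp⟩
  one_mem' := ⟨0, J.zero_mem, by simp⟩
  add_mem' := by
    rintro ⟨a, a'⟩ ⟨b, b'⟩ ⟨j, hj, h1⟩ ⟨k, hk, h2⟩
    exact ⟨j + k, J.add_mem hj hk, by simp_all; ring⟩
  neg_mem' := by
    rintro ⟨a, a'⟩ ⟨j, hj, h1⟩
    exact ⟨-j, J.neg_mem hj, by simp_all; ring⟩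
  mul_mem' := by
    rintro ⟨a, a'⟩ ⟨b, b'⟩ ⟨j, hj, h1⟩ ⟨k, hk, h2⟩
    refine ⟨f a * k + j * f b + j * k, ?_, by simp_all; ring⟩
    exact J.add_mem (J.add_mem (J.mul_mem_left _ hk) (J.mul_mem_right _ hj))
      (J.mul_mem_right _ hj)

/-- The set of zero-divisors of a commutative ring `A`. -/
def zdivSet (A : Type*) [CommRing A] : Set A := {a | ∃ b, b ≠ 0 ∧ a * b = 0}

theorem stmt0 {R S : Type*} [CommRing R] [CommRing S] (f : R →+* S) (J : Ideal S)
    (hJ : J ≠ ⊤) :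
    zdivSet (amalgamation f J) ⊆
      {x : amalgamation f J | (x : R × S).1 ∈ zdivSet R} ∪
      {x : amalgamation f J | ∃ j' ∈ J, j' ≠ 0 ∧ j' * (x : R × S).2 = 0} := by
  rintro ⟨x, hx⟩ ⟨⟨y, hy⟩, hy0, hxy⟩
  obtain ⟨k, hk, hk2⟩ := hy
  have hxy' : x * y = 0 := congrArg Subtype.val hxy
  have h1 : x.1 * y.1 = 0 := congrArg Prod.fst hxy'
  have h2 : x.2 * y.2 = 0 := congrArg Prod.snd hxy'
  by_cases hb : y.1 = 0
  · right
    refine ⟨k, hk, ?_, ?_⟩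
    · intro hk0
      apply hy0
      ext <;> simp [hb, hk2, hk0]
    · rw [hk2, hb, map_zero, zero_add] at h2
      rw [mul_comm]; exact h2
  · left
    exact ⟨y.1, hb, h1⟩
end

section
/- Let R and S be commutative rings with unity, f : R → S a ring homomorphism, and J a proper ideal of S with J ⊆ f(R). Then Z(R ⋈^f J) = {(r, f(r)+j) : r ∈ Z(R), j ∈ J} ∪ {(r, f(r)+j) : r ∈ R, j ∈ J, and there exists j' ∈ J \ {0} with j'(f(r)+j) = 0}. -/
open Pointwise

theorem stmt1 {R S : Type*} [CommRing R] [CommRing S] (f : R →+* S) (J : Ideal S)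
    (hJ : J ≠ ⊤) (hJf : (J : Set S) ⊆ Set.range f) :
    zdivSet (amalgamation f J) =
      {x : amalgamation f J | (x : R × S).1 ∈ zdivSet R} ∪
      {x : amalgamation f J | ∃ j' ∈ J, j' ≠ 0 ∧ j' * (x : R × S).2 = 0} := by
  ext x
  obtain ⟨⟨r, s⟩, j, hj, hs⟩ := x
  dsimp at hs
  subst hs
  constructor
  · rintro ⟨⟨⟨b, s'⟩, k, hk, hs'⟩, hbne, hmul⟩
    dsimp at hs'
    subst hs'
    have hne : (b, f b + k) ≠ ((0, 0) : R × S) := fun h => hbne (Subtype.ext h)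
    have hmul' : ((r, f r + j) : R × S) * (b, f b + k) = (0, 0) :=
      congrArg Subtype.val hmul
    rw [Prod.mk_mul_mk, Prod.mk.injEq] at hmul'
    by_cases hb : b = 0
    · subst hb
      right
      refine ⟨k, hk, ?_, ?_⟩
      · intro h; exact hne (by simp [h])
      · have h2 := hmul'.2
        rw [map_zero, zero_add] at h2
        simpa [mul_comm] using h2
    · left; exact ⟨b, hb, hmul'.1⟩
  · rintro (⟨b, hb0, hrb⟩ | ⟨j', hj', hj'0, hj's⟩)
    · by_cases hjb : j * f b = 0
      · refine ⟨⟨(b, f b), 0, J.zero_mem, by simp⟩, ?_, ?_⟩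
        · intro h
          exact hb0 (congrArg (fun y : amalgamation f J => (y : R × S).1) h)
        · apply Subtype.ext
          show ((r, f r + j) : R × S) * (b, f b) = (0, 0)
          rw [Prod.mk_mul_mk, Prod.mk.injEq]
          refine ⟨hrb, ?_⟩
          rw [add_mul, ← map_mul, hrb, map_zero, zero_add, hjb]
      · obtain ⟨a, ha⟩ := hJf hj
        have hfab : f (a * b) = j * f b := by rw [map_mul, ha]
        refine ⟨⟨(a * b, 0), -(j * f b), J.neg_mem (J.mul_mem_right _ hj), ?_⟩, ?_, ?_⟩
        · dsimp; rw [hfab]; ring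
        · intro h
          apply hjb
          have hab : a * b = 0 := congrArg (fun y : amalgamation f J => (y : R × S).1) h
          rw [← hfab, hab, map_zero]
        · apply Subtype.ext
          show ((r, f r + j) : R × S) * (a * b, 0) = (0, 0)
          rw [Prod.mk_mul_mk, Prod.mk.injEq]
          constructor
          · rw [mul_left_comm, hrb, mul_zero]
          · rw [mul_zero]
    · refine ⟨⟨(0, j'), j', hj', by simp⟩, ?_, ?_⟩
      · intro h
        exact hj'0 (congrArg (fun y : amalgamation f J => (y : R × S).2) h)
      · apply Subtype.ext
        show ((r, f r + j) : R × S) * (0, j') = (0, 0)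
        rw [Prod.mk_mul_mk, Prod.mk.injEq]
        exact ⟨mul_zero r, by rw [mul_comm]; exact hj's⟩
end

section
/- Let R and S be commutative rings with unity, f : R → S a ring homomorphism, and J a proper ideal of S. Assume J is a torsion R-module via f, i.e., for every j ∈ J there exists a regular element t of R with f(t)·j = 0. Then Z(R ⋈^f J) = {(r, f(r)+j) : r ∈ Z(R), j ∈ J} ∪ {(r, f(r)+j) : r ∈ R, j ∈ J, and there exists j' ∈ J \ {0} with j'(f(r)+j) = 0}. -/
open Pointwise

/-
A nonzero annihilator `(b, f b + k)` of `(r, f r + j)` is either `(0, k)` with `0 ≠ k ∈ J`, or has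
`b ≠ 0` and `r b = 0`. Conversely, if `r b = 0` with `b ≠ 0`, torsion gives a regular `t` with
`f t · j f b = 0`, and then `(b t, f (b t))` is a nonzero annihilator of `(r, f r + j)`.
-/

theorem mem_zdivSet_subring_iff {A : Type*} [CommRing A] {B : Subring A} {x : B} :
    x ∈ zdivSet B ↔ ∃ y ∈ B, y ≠ 0 ∧ (x : A) * y = 0 := by
  constructor
  · rintro ⟨y, hy, hxy⟩
    exact ⟨y, y.2, by exact_mod_cast hy, by exact_mod_cast hxy⟩
  · rintro ⟨y, hyB, hy, hxy⟩
    exact ⟨⟨y, hyB⟩, by simpa [Subtype.ext_iff] using hy, Subtype.ext hxy⟩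

namespace amalgamation

variable {R S : Type*} [CommRing R] [CommRing S] {f : R →+* S} {J : Ideal S}

theorem mk_zero_mem {j : S} (hj : j ∈ J) : ((0 : R), j) ∈ amalgamation f J :=
  ⟨j, hj, by simp⟩

theorem mk_map_mem (r : R) : (r, f r) ∈ amalgamation f J :=
  ⟨0, J.zero_mem, by simp⟩

theorem fst_mem_zdivSet_or_exists_annihilator {x : amalgamation f J}
    (hx : x ∈ zdivSet (amalgamation f J)) :
    (x : R × S).1 ∈ zdivSet R ∨ ∃ j' ∈ J, j' ≠ 0 ∧ j' * (x : R × S).2 = 0 := by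
  obtain ⟨⟨b, s'⟩, ⟨k, hk, hs'⟩, hy, hxy⟩ := mem_zdivSet_subring_iff.mp hx
  obtain ⟨hrb, hss'⟩ := Prod.ext_iff.mp hxy
  by_cases hb : b = 0
  · subst hb
    simp only [map_zero, zero_add] at hs'
    subst hs'
    refine Or.inr ⟨s', hk, fun h => hy (by simp [h]), ?_⟩
    simpa [mul_comm] using hss'
  · exact Or.inl ⟨b, hb, hrb⟩

theorem mem_zdivSet_of_annihilator {x : amalgamation f J} {j' : S} (hj' : j' ∈ J)
    (hj'0 : j' ≠ 0) (hx : j' * (x : R × S).2 = 0) : x ∈ zdivSet (amalgamation f J) :=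
  mem_zdivSet_subring_iff.mpr
    ⟨(0, j'), mk_zero_mem hj', by simp [hj'0], by simp [Prod.ext_iff, mul_comm, hx]⟩

theorem mem_zdivSet_of_fst_mem_zdivSet
    (htor : ∀ j ∈ J, ∃ t ∈ nonZeroDivisors R, f t * j = 0) {x : amalgamation f J}
    (hx : (x : R × S).1 ∈ zdivSet R) : x ∈ zdivSet (amalgamation f J) := by
  obtain ⟨⟨r, s⟩, j, hj, hs⟩ := x
  obtain ⟨b, hb, hrb⟩ := hx
  obtain ⟨t, ht, htj⟩ := htor (j * f b) (J.mul_mem_right _ hj)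
  refine mem_zdivSet_subring_iff.mpr ⟨(b * t, f (b * t)), mk_map_mem _, ?_, ?_⟩
  · intro h
    exact hb (ht.2 b (congrArg Prod.fst h))
  · have hrb' : r * b = 0 := hrb
    have hs' : s * f (b * t) = f t * (f (r * b) + j * f b) := by
      rw [show s = f r + j from hs, map_mul, map_mul]; ring
    simp only [Prod.mk_mul_mk, Prod.ext_iff, Prod.fst_zero, Prod.snd_zero, hs']
    exact ⟨by rw [← mul_assoc, hrb', zero_mul], by rw [hrb', map_zero, zero_add, htj]⟩

end amalgamation

theorem stmt2_general {R S : Type*} [CommRing R] [CommRing S] (f : R →+* S) (J : Ideal S)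
    (htor : ∀ j ∈ J, ∃ t ∈ nonZeroDivisors R, f t * j = 0) :
    zdivSet (amalgamation f J) =
      {x : amalgamation f J | (x : R × S).1 ∈ zdivSet R} ∪
      {x : amalgamation f J | ∃ j' ∈ J, j' ≠ 0 ∧ j' * (x : R × S).2 = 0} := by
  ext x
  refine ⟨amalgamation.fst_mem_zdivSet_or_exists_annihilator, ?_⟩
  rintro (hx | ⟨j', hj', hj'0, hx⟩)
  · exact amalgamation.mem_zdivSet_of_fst_mem_zdivSet htor hx
  · exact amalgamation.mem_zdivSet_of_annihilator hj' hj'0 hx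

theorem stmt2 {R S : Type*} [CommRing R] [CommRing S] (f : R →+* S) (J : Ideal S)
    (hJ : J ≠ ⊤) (htor : ∀ j ∈ J, ∃ t ∈ nonZeroDivisors R, f t * j = 0) :
    zdivSet (amalgamation f J) =
      {x : amalgamation f J | (x : R × S).1 ∈ zdivSet R} ∪
      {x : amalgamation f J | ∃ j' ∈ J, j' ≠ 0 ∧ j' * (x : R × S).2 = 0} :=
  stmt2_general f J htor
end

section
/- Let R be a commutative ring with Z(R) ⊆ Jac(R) and let m be a maximal ideal of R. Then (R, m) has the regular total order property if and only if for all x, y ∈ R with x regular, the principal ideals xR_m and yR_m of R_m are comparable under inclusion. -/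
open Pointwise

/-- `(R, p)` has the regular total order property if for every pair of ideals of `R`,
at least one of which is regular, the extended ideals in `R_p` are comparable. -/
def HasRegularTotalOrderProperty (R : Type*) [CommRing R] (p : Ideal R) [p.IsPrime] : Prop :=
  ∀ a b : Ideal R,
    ((∃ r ∈ a, r ∈ nonZeroDivisors R) ∨ (∃ r ∈ b, r ∈ nonZeroDivisors R)) →
      (a.map (algebraMap R (Localization.AtPrime p)) ≤
          b.map (algebraMap R (Localization.AtPrime p)) ∨
        b.map (algebraMap R (Localization.AtPrime p)) ≤
          a.map (algebraMap R (Localization.AtPrime p)))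

open scoped nonZeroDivisors

/-!
Since `Z(R) ⊆ Jac(R) ⊆ m`, every element outside `m` is regular, so `R → R_m` is injective and
every regular element of `R_m` is, up to a unit, the image of a regular element of `R`. The
hypothesis therefore says that in `R_m` a regular element and an arbitrary element are always
comparable under divisibility. In such a ring `S`, two divisors `a = r / v`, `b = r / w` of a
regular `r` are comparable (compare the regular cofactors `v` and `w`), and this forces an ideal
containing a regular `r` to be comparable with every other ideal: for `b ∈ J \ I` and `a ∈ I`,
either `a ∈ (r) ⊆ (b)`, or `a` and `b` both divide `r` and so `b ∣ a`.
-/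

section DvdTotal

variable {S : Type*} [CommRing S] (h : ∀ x y : S, x ∈ S⁰ → x ∣ y ∨ y ∣ x)
include h

theorem dvd_or_dvd_of_dvd_of_dvd_of_mem_nonZeroDivisors {r a b : S} (hr : r ∈ S⁰)
    (ha : a ∣ r) (hb : b ∣ r) : a ∣ b ∨ b ∣ a := by
  obtain ⟨v, rfl⟩ := ha
  obtain ⟨w, hw⟩ := hb
  have hv : v ∈ S⁰ := (mul_mem_nonZeroDivisors.mp hr).2
  have hw' : w ∈ S⁰ := (mul_mem_nonZeroDivisors.mp (hw ▸ hr)).2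
  rcases h v w hv with hvw | hwv
  · right
    rw [← dvd_cancel_right_mem_nonZeroDivisors hv, hw]
    exact mul_dvd_mul_left b hvw
  · left
    rw [← dvd_cancel_right_mem_nonZeroDivisors hw', ← hw]
    exact mul_dvd_mul_left a hwv

theorem Ideal.le_or_le_of_exists_mem_nonZeroDivisors (I J : Ideal S)
    (hI : ∃ r ∈ I, r ∈ S⁰) : I ≤ J ∨ J ≤ I := by
  obtain ⟨r, hrI, hr⟩ := hI
  refine or_iff_not_imp_right.mpr fun hJI ↦ ?_
  obtain ⟨b, hbJ, hbI⟩ := Set.not_subset.mp hJI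
  have hbr : b ∣ r := (h r b hr).resolve_left fun hrb ↦ hbI (I.mem_of_dvd hrb hrI)
  intro a haI
  rcases h r a hr with hra | har
  · exact J.mem_of_dvd (hbr.trans hra) hbJ
  · rcases dvd_or_dvd_of_dvd_of_dvd_of_mem_nonZeroDivisors h hr har hbr with hab | hba
    · exact absurd (I.mem_of_dvd hab haI) hbI
    · exact J.mem_of_dvd hba hbJ

end DvdTotal

theorem IsLocalization.dvd_or_dvd_of_mem_nonZeroDivisors {R : Type*} [CommRing R]
    {M : Submonoid R} (hM : M ≤ R⁰) {S : Type*} [CommRing S] [Algebra R S] [IsLocalization M S]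
    (h : ∀ x y : R, x ∈ R⁰ → algebraMap R S x ∣ algebraMap R S y ∨
      algebraMap R S y ∣ algebraMap R S x)
    (x y : S) (hx : x ∈ S⁰) : x ∣ y ∨ y ∣ x := by
  obtain ⟨⟨x', s⟩, hxs⟩ := IsLocalization.surj M x
  obtain ⟨⟨y', t⟩, hyt⟩ := IsLocalization.surj M y
  have hx' : Associated (algebraMap R S x') x :=
    hxs ▸ associated_mul_unit_left x _ (IsLocalization.map_units S s)
  have hy' : Associated (algebraMap R S y') y :=
    hyt ▸ associated_mul_unit_left y _ (IsLocalization.map_units S t)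
  have hx'reg : x' ∈ R⁰ := mem_nonZeroDivisors_of_injective (IsLocalization.injective S hM)
    (hxs ▸ mul_mem hx (IsLocalization.map_units S s).mem_nonZeroDivisors)
  rw [← hx'.dvd_iff_dvd_left, ← hx'.dvd_iff_dvd_right, ← hy'.dvd_iff_dvd_left,
    ← hy'.dvd_iff_dvd_right]
  exact h x' y' hx'reg

theorem primeCompl_le_nonZeroDivisors_of_zdivSet_subset {R : Type*} [CommRing R]
    {p : Ideal R} [p.IsPrime] (hp : zdivSet R ⊆ p) : p.primeCompl ≤ R⁰ := by
  intro u hu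
  rw [mem_nonZeroDivisors_iff_right]
  intro x hxu
  by_contra hx
  exact hu (hp ⟨x, hx, mul_comm u x ▸ hxu⟩)

theorem stmt4 {R : Type*} [CommRing R]
    (hZJ : zdivSet R ⊆ (Ideal.jacobson (⊥ : Ideal R) : Set R))
    (m : Ideal R) [m.IsMaximal] :
    HasRegularTotalOrderProperty R m ↔
      ∀ x y : R, x ∈ nonZeroDivisors R →
        (Ideal.span {algebraMap R (Localization.AtPrime m) x} ≤
            Ideal.span {algebraMap R (Localization.AtPrime m) y} ∨
          Ideal.span {algebraMap R (Localization.AtPrime m) y} ≤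
            Ideal.span {algebraMap R (Localization.AtPrime m) x}) := by
  set f := algebraMap R (Localization.AtPrime m)
  constructor
  · intro H x y hx
    simpa only [Ideal.map_span, Set.image_singleton] using
      H (Ideal.span {x}) (Ideal.span {y}) (Or.inl ⟨x, Ideal.mem_span_singleton_self x, hx⟩)
  · intro H a b hab
    have hZm : zdivSet R ⊆ m := hZJ.trans <| SetLike.coe_subset_coe.mpr <|
      Ideal.jacobson_eq_self_of_isMaximal (I := m) ▸ Ideal.jacobson_mono bot_le
    have hdvd := IsLocalization.dvd_or_dvd_of_mem_nonZeroDivisors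
      (primeCompl_le_nonZeroDivisors_of_zdivSet_subset hZm) fun x y hx ↦ by
        simpa only [Ideal.span_singleton_le_span_singleton, or_comm] using H x y hx
    have hreg : ∀ c : Ideal R, (∃ r ∈ c, r ∈ R⁰) → ∃ r ∈ c.map f, r ∈ (Localization.AtPrime m)⁰ :=
      fun c ⟨r, hrc, hr⟩ ↦ ⟨f r, Ideal.mem_map_of_mem f hrc,
        IsLocalization.nonZeroDivisors_le_comap m.primeCompl _ hr⟩
    rcases hab with ha | hb
    · exact Ideal.le_or_le_of_exists_mem_nonZeroDivisors hdvd _ _ (hreg a ha)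
    · exact (Ideal.le_or_le_of_exists_mem_nonZeroDivisors hdvd _ _ (hreg b hb)).symm
end

section
/- Let R and S be commutative rings with unity, f : R → S a ring homomorphism, and J a proper ideal of S. Assume f maps every regular element of R to a regular element of S. If the amalgamation R ⋈^f J is a Prüfer ring, then R is a Prüfer ring and J_{T_m} = f(r)·J_{T_m} for every maximal ideal m of R and every regular element r of R. -/
open Pointwise

/-- A commutative ring is a Prüfer ring if every nonzero finitely generated regular ideal
is projective (equivalently, invertible). -/
def IsPruferRing (A : Type*) [CommRing A] : Prop :=
  ∀ I : Ideal A, I ≠ ⊥ → I.FG → (∃ r ∈ I, r ∈ nonZeroDivisors A) → Module.Projective A I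

/-- The multiplicatively closed subset `T_m = f(R \\ m) + J` of `S`. -/
def amalgT {R S : Type*} [CommRing R] [CommRing S] (f : R →+* S) (J : Ideal S)
    (m : Ideal R) (hm : m.IsPrime) : Submonoid S where
  carrier := {s | ∃ a ∉ m, ∃ j ∈ J, s = f a + j}
  one_mem' := ⟨1, fun h => hm.ne_top ((Ideal.eq_top_iff_one m).mpr h), 0, J.zero_mem, by simp⟩
  mul_mem' := by
    rintro s t ⟨a, ha, j, hj, rfl⟩ ⟨b, hb, k, hk, rfl⟩
    refine ⟨a * b, fun h => ?_, f a * k + j * f b + j * k, ?_, by simp [map_mul]; ring⟩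
    · rcases hm.mem_or_mem h with h | h
      exacts [ha h, hb h]
    · exact J.add_mem (J.add_mem (J.mul_mem_left _ hk) (J.mul_mem_right _ hj))
        (J.mul_mem_right _ hj)

/-!
Everything comes from dual bases of projective ideals of `A = R ⋈^f J`.

The ring `R` is a retract of `A` via `r ↦ (r, f r)` and the first projection, so a dual basis
of the extension to `A` of a regular ideal of `R` projects to a dual basis of the ideal itself.

For `r` regular and `j ∈ J`, a dual basis of the regular ideal `((r, f r), (0, j))` of `A` gives
`d, k ∈ A` with `(0, j) = d (r, f r) + k (0, j)` and `(r, f r) k ∈ (0, j) A`. Comparing first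
components and cancelling `r` puts `d` and `k` in `0 × J`, and the second components give
`(1 - k) j = d f(r)`, where `1 - k ∈ T_m`; hence `j ∈ f(r) J_{T_m}`.
-/

namespace Ideal

variable {A : Type*} [CommRing A]

theorem exists_linearMap_finsupp_of_projective {I : Ideal A} [Module.Projective A I]
    {ι : Type*} (g : ι → A) (hg : span (Set.range g) = I) :
    ∃ φ : I →ₗ[A] ι →₀ A, ∀ x : I, Finsupp.linearCombination A g (φ x) = x := by
  have hgI : ∀ i, g i ∈ I := fun i => hg ▸ subset_span ⟨i, rfl⟩
  let g' : ι → I := fun i => ⟨g i, hgI i⟩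
  have hsurj : LinearMap.range (Finsupp.linearCombination A g') = ⊤ := by
    rw [Finsupp.range_linearCombination, Submodule.span_range_subtype_eq_top_iff]
    exact hg
  obtain ⟨φ, hφ⟩ := LinearMap.exists_rightInverse_of_surjective _ hsurj
  refine ⟨φ, fun x => ?_⟩
  calc Finsupp.linearCombination A g (φ x)
      = I.subtype (Finsupp.linearCombination A g' (φ x)) := by
        rw [Finsupp.apply_linearCombination]; rfl
    _ = x := congrArg I.subtype (LinearMap.congr_fun hφ x)

theorem projective_of_projective_map {R : Type*} [CommRing R] (e : R →+* A) (π : A →+* R)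
    (hπe : Function.LeftInverse π e) (I : Ideal R) [Module.Projective A (I.map e)] :
    Module.Projective R I := by
  obtain ⟨φ, hφ⟩ := exists_linearMap_finsupp_of_projective (I := I.map e)
    (fun x : I => e x) (by rw [Ideal.map, Set.image_eq_range]; rfl)
  let lift : I → I.map e := fun x => ⟨e x, mem_map_of_mem e x.2⟩
  have lift_add (x y : I) : lift (x + y) = lift x + lift y := Subtype.ext (map_add e x.1 y.1)
  have lift_smul (c : R) (x : I) : lift (c • x) = e c • lift x := Subtype.ext (map_mul e c x.1)
  let s : I →ₗ[R] I →₀ R :=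
    { toFun := fun x => Finsupp.mapRange π (map_zero π) (φ (lift x))
      map_add' := fun x y => by ext; simp [lift_add]
      map_smul' := fun c x => by ext; simp [lift_smul, hπe c] }
  refine Module.projective_def.mpr ⟨s, fun x => Subtype.ext ?_⟩
  calc ((Finsupp.linearCombination R id (s x) : I) : R)
      = π (Finsupp.linearCombination A (fun y : I => e y) (φ (lift x))) := by
        simp only [s, LinearMap.coe_mk, AddHom.coe_mk, Finsupp.linearCombination_apply,
          map_finsuppSum]
        rw [Finsupp.sum_mapRange_index (by simp)]
        simp [Finsupp.sum, hπe _]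
    _ = x := by rw [hφ]; exact hπe x

theorem exists_eq_mul_add_mul_of_projective_span_pair (a b : A)
    [Module.Projective A (span {a, b})] :
    ∃ d k c : A, b = d * a + k * b ∧ a * k = b * c := by
  obtain ⟨φ, hφ⟩ := exists_linearMap_finsupp_of_projective ![a, b]
    (by rw [Matrix.range_cons_cons_empty])
  let xa : span {a, b} := ⟨a, subset_span (by simp)⟩
  let xb : span {a, b} := ⟨b, subset_span (by simp)⟩
  have hswap : a • xb = b • xa := Subtype.ext (mul_comm a b)
  refine ⟨φ xb 0, φ xb 1, φ xa 1, ?_, ?_⟩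
  · simpa [Finsupp.linearCombination_apply, Finsupp.sum_fintype, mul_comm] using (hφ xb).symm
  · simpa using congrArg (fun v => v 1) (congrArg φ hswap)

end Ideal

namespace amalgamation

variable {R S : Type*} [CommRing R] [CommRing S] (f : R →+* S) (J : Ideal S)

def diag : R →+* amalgamation f J :=
  ((RingHom.id R).prod f).codRestrict _ fun _ => ⟨0, J.zero_mem, (add_zero _).symm⟩

def fst : amalgamation f J →+* R :=
  (RingHom.fst R S).comp (amalgamation f J).subtype

@[simp]
theorem coe_diag (r : R) : (diag f J r : R × S) = (r, f r) := rfl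

theorem fst_leftInverse_diag : Function.LeftInverse (fst f J) (diag f J) := fun _ => rfl

variable {f J}

theorem snd_mem_of_fst_eq_zero {x : amalgamation f J} (hx : (x : R × S).1 = 0) :
    (x : R × S).2 ∈ J := by
  obtain ⟨j, hj, hx2⟩ := x.2
  rwa [hx2, hx, map_zero, zero_add]

theorem diag_mem_nonZeroDivisors (hreg : ∀ r ∈ nonZeroDivisors R, f r ∈ nonZeroDivisors S)
    {r : R} (hr : r ∈ nonZeroDivisors R) : diag f J r ∈ nonZeroDivisors (amalgamation f J) :=
  mem_nonZeroDivisors_iff_right.mpr fun _ hx => Subtype.ext <| Prod.ext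
    (hr.2 _ congr(($hx : R × S).1)) ((hreg r hr).2 _ congr(($hx : R × S).2))

theorem _root_.IsPruferRing.of_amalgamation
    (hreg : ∀ r ∈ nonZeroDivisors R, f r ∈ nonZeroDivisors S)
    (hP : IsPruferRing (amalgamation f J)) : IsPruferRing R := by
  rintro I hI hfg ⟨r, hrI, hr⟩
  have hinj := (fst_leftInverse_diag f J).injective
  have := hP (I.map (diag f J)) ((Ideal.map_eq_bot_iff_of_injective hinj).not.mpr hI)
    (hfg.map _) ⟨_, Ideal.mem_map_of_mem _ hrI, diag_mem_nonZeroDivisors hreg hr⟩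
  exact Ideal.projective_of_projective_map _ _ (fst_leftInverse_diag f J) I

theorem exists_one_sub_mul_eq_mul (hJ : J ≠ ⊤)
    (hreg : ∀ r ∈ nonZeroDivisors R, f r ∈ nonZeroDivisors S)
    (hP : IsPruferRing (amalgamation f J)) {r : R} (hr : r ∈ nonZeroDivisors R)
    {j : S} (hj : j ∈ J) : ∃ d ∈ J, ∃ k ∈ J, (1 - k) * j = d * f r := by
  have : Nontrivial S :=
    nontrivial_of_ne 0 1 fun h => hJ (J.eq_top_iff_one.mpr (h ▸ J.zero_mem))
  have := f.domain_nontrivial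
  have := (fst f J).domain_nontrivial
  let b : amalgamation f J := ⟨(0, j), j, hj, by simp⟩
  have ha := diag_mem_nonZeroDivisors (J := J) hreg hr
  have haI : diag f J r ∈ Ideal.span {diag f J r, b} := Ideal.subset_span (by simp)
  have := hP _ ((Submodule.ne_bot_iff _).mpr ⟨_, haI, nonZeroDivisors.ne_zero ha⟩)
    (Submodule.fg_span (by simp)) ⟨_, haI, ha⟩
  obtain ⟨d, k, c, hb, hak⟩ :=
    Ideal.exists_eq_mul_add_mul_of_projective_span_pair (diag f J r) b
  have hd : (d : R × S).1 = 0 := hr.2 _ (by simpa [b] using congr(($hb : R × S).1).symm)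
  have hk : (k : R × S).1 = 0 :=
    hr.2 _ (by rw [mul_comm]; simpa [b] using congr(($hak : R × S).1))
  refine ⟨_, snd_mem_of_fst_eq_zero hd, _, snd_mem_of_fst_eq_zero hk, ?_⟩
  have := congr(($hb : R × S).2)
  simp only [Subring.coe_add, Subring.coe_mul, coe_diag, Prod.snd_add, Prod.snd_mul, b] at this
  linear_combination this

theorem one_sub_mem_amalgT (m : Ideal R) (hm : m.IsPrime) {k : S} (hk : k ∈ J) :
    1 - k ∈ amalgT f J m hm :=
  ⟨1, fun h => hm.ne_top (m.eq_top_iff_one.mpr h), -k, J.neg_mem hk, by simp [sub_eq_add_neg]⟩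

theorem algebraMap_smul_map_amalgT_eq (hJ : J ≠ ⊤)
    (hreg : ∀ r ∈ nonZeroDivisors R, f r ∈ nonZeroDivisors S)
    (hP : IsPruferRing (amalgamation f J)) (m : Ideal R) (hm : m.IsPrime) {r : R}
    (hr : r ∈ nonZeroDivisors R) :
    algebraMap S (Localization (amalgT f J m hm)) (f r) •
        J.map (algebraMap S (Localization (amalgT f J m hm))) =
      J.map (algebraMap S (Localization (amalgT f J m hm))) := by
  set L := Localization (amalgT f J m hm)
  refine le_antisymm (Submodule.smul_le_self_of_tower _ _)
    (Ideal.map_le_iff_le_comap.mpr fun j hj => ?_)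
  obtain ⟨d, hd, k, hk, hdk⟩ := exists_one_sub_mul_eq_mul hJ hreg hP hr hj
  let t : amalgT f J m hm := ⟨1 - k, one_sub_mem_amalgT m hm hk⟩
  have hj_eq : algebraMap S L j = algebraMap S L (f r) * IsLocalization.mk' L d t := by
    rw [IsLocalization.mul_mk'_eq_mk'_of_mul, eq_comm, IsLocalization.mk'_eq_iff_eq_mul,
      ← map_mul, mul_comm j, mul_comm (f r)]
    exact congrArg _ hdk.symm
  rw [Ideal.mem_comap, hj_eq, IsLocalization.mk'_eq_mul_mk'_one]
  exact Submodule.smul_mem_pointwise_smul _ _ _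
    (Ideal.mul_mem_right _ _ (Ideal.mem_map_of_mem _ hd))

end amalgamation

theorem stmt5 {R S : Type*} [CommRing R] [CommRing S] (f : R →+* S) (J : Ideal S)
    (hJ : J ≠ ⊤) (hreg : ∀ r ∈ nonZeroDivisors R, f r ∈ nonZeroDivisors S)
    (hP : IsPruferRing (amalgamation f J)) :
    IsPruferRing R ∧
      ∀ (m : Ideal R) (hm : m.IsMaximal), ∀ r ∈ nonZeroDivisors R,
        algebraMap S (Localization (amalgT f J m hm.isPrime)) (f r) •
            J.map (algebraMap S (Localization (amalgT f J m hm.isPrime))) =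
          J.map (algebraMap S (Localization (amalgT f J m hm.isPrime))) :=
  ⟨IsPruferRing.of_amalgamation hreg hP, fun m hm _ hr =>
    amalgamation.algebraMap_smul_map_amalgT_eq hJ hreg hP m hm.isPrime hr⟩
end

section
/- Let R and S be commutative rings with unity, f : R → S a ring homomorphism, and J a proper ideal of S. Assume f maps every regular element of R to a regular element of S, that R ⋈^f J satisfies condition ★, and that Z(R ⋈^f J) ⊆ Jac(R ⋈^f J). If R is a Prüfer ring and J_{T_m} = f(r)·J_{T_m} for every maximal ideal m of R and every regular element r of R, then R ⋈^f J is a Prüfer ring. -/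
open Pointwise

/-- Condition `★`: the zero-divisors of `R ⋈^f J` are exactly the elements whose first
coordinate is a zero-divisor of `R` together with the elements `(r, f r + j)` such that
`f r + j` is killed by some nonzero element of `J`. -/
def conditionStar {R S : Type*} [CommRing R] [CommRing S] (f : R →+* S) (J : Ideal S) : Prop :=
  ∀ x : amalgamation f J, x ∈ zdivSet (amalgamation f J) ↔
    ((x : R × S).1 ∈ zdivSet R ∨ ∃ j' ∈ J, j' ≠ 0 ∧ j' * (x : R × S).2 = 0)

/-!
Let `x = (a, f a + k)` be a regular element of a finitely generated ideal `I` of `R ⋈^f J`, and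
let `π` be the first projection. By `★`, `a` is regular, so `π(I)` is invertible in the Prüfer
ring `R`: `π(I) * I₀ = (a)`. The kernel `0 × J` of `π` consists of zero-divisors, hence lies in
every maximal ideal, so `π` maps maximal ideals to maximal ideals. Localizing at each `T_m`, where
`1 + J_{T_m}` consists of units, the hypothesis `J_{T_m} = f(a) J_{T_m}` becomes
`J_{T_m} = (f a + k) J_{T_m}`, and a local-global argument gives `J = (f a + k) J`, i.e.
`ker π = x * ker π`. Then `I * π⁻¹(I₀)` and `(x)` both contain `ker π` and have the same image
`(a)`, so they are equal and `I` is invertible.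
-/

namespace Ideal

variable {A : Type*} [CommRing A]

theorem exists_mul_eq_span_singleton_of_projective {I : Ideal A} [Module.Projective A I] {a : A}
    (ha : a ∈ I) : ∃ I' : Ideal A, I * I' = span {a} := by
  obtain ⟨s, hs⟩ := Module.projective_def.mp ‹Module.Projective A I›
  set g := s ⟨a, ha⟩
  -- `s` is linear and `a • r = r • a` in `I`, so `a • s r = r • g`.
  have hcoeff : ∀ (r : I) (p : I), (r : A) * g p = a * s r p := by
    intro r p
    have : a • s r = (r : A) • g := by
      rw [← map_smul, ← map_smul]
      congr 1
      ext
      simp [mul_comm]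
    simpa using (DFunLike.congr_fun this p).symm
  refine ⟨span (Set.range g), le_antisymm ?_ ?_⟩
  · rw [mul_le]
    intro r hr t ht
    have hle : span (Set.range g) ≤ (span {a}).colon (span {r}) := by
      rw [span_le]
      rintro _ ⟨p, rfl⟩
      rw [SetLike.mem_coe, mem_colon_span_singleton, mul_comm, hcoeff ⟨r, hr⟩ p]
      exact mem_span_singleton'.mpr ⟨_, mul_comm _ _⟩
    rw [mul_comm]
    exact mem_colon_span_singleton.mp (hle ht)
  · have hsum : a = ∑ p ∈ g.support, (p : A) * g p := by
      have := congrArg Subtype.val (hs ⟨a, ha⟩)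
      simp only [Finsupp.linearCombination_apply, Finsupp.sum, Submodule.coe_sum,
        Submodule.coe_smul, smul_eq_mul, id] at this
      rw [← this]
      exact Finset.sum_congr rfl fun p _ => mul_comm _ _
    rw [span_singleton_le_iff_mem, hsum]
    exact sum_mem _ fun p _ => mul_mem_mul p.2 (subset_span ⟨p, rfl⟩)

theorem projective_of_mul_eq_span_singleton {I I' : Ideal A} {x : A} (hx : x ∈ nonZeroDivisors A)
    (h : I * I' = span {x}) : Module.Projective A I := by
  let K := FractionRing A
  let ι : A →ₐ[A] K := Algebra.ofId A K
  obtain ⟨u, hu⟩ := IsLocalization.map_units K (⟨x, hx⟩ : nonZeroDivisors A)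
  have hI : IsUnit (Submodule.map ι.toLinearMap I) := by
    refine .of_mul_eq_one (Submodule.map ι.toLinearMap I' * Submodule.span A {((u⁻¹ : Kˣ) : K)}) ?_
    rw [← mul_assoc, ← Submodule.map_mul, h, Ideal.span, Submodule.map_span, Set.image_singleton,
      Submodule.span_mul_span, Set.singleton_mul_singleton, Submodule.one_eq_span]
    congr 2
    simp [ι, ← hu]
  have := Submodule.projective_of_isUnit hI
  exact Module.Projective.of_equiv
    (Submodule.equivMapOfInjective ι.toLinearMap (IsFractionRing.injective A K) I).symm

end Ideal

section Localization

variable {S : Type*} [CommRing S] {J : Ideal S} {T : Submonoid S} (L : Type*) [CommRing L]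
  [Algebra S L] [IsLocalization T L]

theorem isUnit_one_add_of_mem_map (hT : ∀ t ∈ T, ∀ j ∈ J, t + j ∈ T) {κ : L}
    (hκ : κ ∈ J.map (algebraMap S L)) : IsUnit (1 + κ) := by
  obtain ⟨⟨⟨j, hj⟩, t⟩, hκ⟩ := (IsLocalization.mem_map_algebraMap_iff T L).mp hκ
  have : (1 + κ) * algebraMap S L t = algebraMap S L (t + j) := by
    rw [map_add, add_mul, one_mul, hκ]
  exact isUnit_of_mul_isUnit_left (this ▸ IsLocalization.map_units L ⟨_, hT t t.2 j hj⟩)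

theorem exists_mul_mem_smul_of_smul_map_eq (hT : ∀ t ∈ T, ∀ j ∈ J, t + j ∈ T) {s : S}
    (hs : algebraMap S L s • J.map (algebraMap S L) = J.map (algebraMap S L))
    {k j : S} (hk : k ∈ J) (hj : j ∈ J) : ∃ t ∈ T, t * j ∈ (s + k) • J := by
  have hdiv : ∀ y ∈ J, ∃ z ∈ J.map (algebraMap S L), algebraMap S L s * z = algebraMap S L y :=
    fun y hy => (Submodule.mem_smul_pointwise_iff_exists _ _ _).mp (hs ▸ Ideal.mem_map_of_mem _ hy)
  obtain ⟨κ, hκ, hκk⟩ := hdiv k hk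
  obtain ⟨z, hz, hzj⟩ := hdiv j hj
  -- `s + k = s * (1 + κ)` in `L`, and `1 + κ` is a unit.
  obtain ⟨v, hv⟩ := isUnit_one_add_of_mem_map L hT hκ
  have hL : algebraMap S L (s + k) * (↑v⁻¹ * z) = algebraMap S L j := by
    rw [← hzj, map_add, ← hκk, ← mul_one_add, ← hv]
    calc algebraMap S L s * ↑v * (↑v⁻¹ * z) = algebraMap S L s * z * (↑v * ↑v⁻¹) := by ring
      _ = algebraMap S L s * z := by rw [Units.mul_inv, mul_one]
  obtain ⟨⟨⟨j₁, hj₁⟩, t₁⟩, e₁⟩ :=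
    (IsLocalization.mem_map_algebraMap_iff T L).mp (Ideal.mul_mem_left _ (↑v⁻¹) hz)
  have : algebraMap S L (t₁ * j) = algebraMap S L ((s + k) * j₁) := by
    rw [map_mul, map_mul, ← e₁, ← hL]
    ring
  obtain ⟨t₂, e₂⟩ := (IsLocalization.eq_iff_exists T L).mp this
  refine ⟨t₂ * t₁, (t₂ * t₁).2, (Submodule.mem_smul_pointwise_iff_exists _ _ _).mpr
    ⟨t₂ * j₁, J.mul_mem_left _ hj₁, ?_⟩⟩
  rw [smul_eq_mul]
  linear_combination e₂.symm

end Localization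

namespace amalgamation

variable {R S : Type*} [CommRing R] [CommRing S] (f : R →+* S) (J : Ideal S)

def snd : amalgamation f J →+* S := (RingHom.snd R S).comp (amalgamation f J).subtype

def inr (j : J) : amalgamation f J := ⟨(0, j), j, j.2, by simp⟩

theorem fst_surjective : Function.Surjective (fst f J) :=
  fun r => ⟨⟨(r, f r), 0, J.zero_mem, by simp⟩, rfl⟩

theorem mem_ker_fst {x : amalgamation f J} : x ∈ RingHom.ker (fst f J) ↔ ∃ j, inr f J j = x := by
  refine ⟨fun hx => ?_, ?_⟩
  · obtain ⟨j, hj, hx₂⟩ := x.2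
    have hx₁ : (x : R × S).1 = 0 := hx
    exact ⟨⟨j, hj⟩, Subtype.ext (Prod.ext hx₁.symm (by simp [inr, hx₂, hx₁]))⟩
  · rintro ⟨j, rfl⟩
    rfl

theorem add_mem_amalgT {m : Ideal R} (hm : m.IsPrime) {t j : S} (ht : t ∈ amalgT f J m hm)
    (hj : j ∈ J) : t + j ∈ amalgT f J m hm := by
  obtain ⟨a, ha, j', hj', rfl⟩ := ht
  exact ⟨a, ha, j' + j, J.add_mem hj' hj, by ring⟩

variable {f J}

theorem fst_mem_nonZeroDivisors (hstar : conditionStar f J) {x : amalgamation f J}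
    (hx : x ∈ nonZeroDivisors (amalgamation f J)) : fst f J x ∈ nonZeroDivisors R := by
  refine mem_nonZeroDivisors_iff_right.mpr fun r hr => by_contra fun hr₀ => ?_
  obtain ⟨y, hy, hxy⟩ := (hstar x).mpr (Or.inl ⟨r, hr₀, by rw [mul_comm]; exact hr⟩)
  exact hy (mem_nonZeroDivisors_iff_right.mp hx y (by rw [mul_comm]; exact hxy))

theorem ker_fst_le_of_isMaximal [Nontrivial R] (hstar : conditionStar f J)
    (hZJ : zdivSet (amalgamation f J) ⊆
      (Ideal.jacobson (⊥ : Ideal (amalgamation f J)) : Set (amalgamation f J)))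
    (M : Ideal (amalgamation f J)) [M.IsMaximal] : RingHom.ker (fst f J) ≤ M := by
  intro x hx
  obtain ⟨j, rfl⟩ := (mem_ker_fst f J).mp hx
  have hzdiv : inr f J j ∈ zdivSet (amalgamation f J) :=
    (hstar _).mpr (Or.inl ⟨1, one_ne_zero, zero_mul 1⟩)
  rw [← Ideal.jacobson_eq_self_of_isMaximal (I := M)]
  exact Ideal.jacobson_mono bot_le (hZJ hzdiv)

theorem mem_smul_of_forall_exists_mul_mem [Nontrivial R] (hstar : conditionStar f J)
    (hZJ : zdivSet (amalgamation f J) ⊆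
      (Ideal.jacobson (⊥ : Ideal (amalgamation f J)) : Set (amalgamation f J)))
    {u j : S}
    (h : ∀ (m : Ideal R) (hm : m.IsMaximal), ∃ t ∈ amalgT f J m hm.isPrime, t * j ∈ u • J) :
    j ∈ u • J := by
  -- the ideal of those `(r, s)` with `s * j ∈ u • J` lies in no maximal ideal
  let Q := ((u • J).colon (Ideal.span {j})).comap (snd f J)
  by_contra hj
  have hQ : Q ≠ ⊤ := fun hQ => hj <| by
    simpa [Q, snd] using Ideal.mem_colon_span_singleton.mp (hQ ▸ Submodule.mem_top : (1 : _) ∈ Q)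
  obtain ⟨M, hM, hQM⟩ := Q.exists_le_maximal hQ
  have hm := Ideal.IsMaximal.map_of_surjective_of_ker_le (fst_surjective f J)
    (ker_fst_le_of_isMaximal hstar hZJ M)
  obtain ⟨_, ⟨b, hb, j', hj', rfl⟩, ht⟩ := h _ hm
  exact hb (Ideal.mem_map_of_mem (fst f J) (x := ⟨(b, f b + j'), j', hj', rfl⟩)
    (hQM (Ideal.mem_colon_span_singleton.mpr ht)))

theorem le_smul [Nontrivial R] (hstar : conditionStar f J)
    (hZJ : zdivSet (amalgamation f J) ⊆
      (Ideal.jacobson (⊥ : Ideal (amalgamation f J)) : Set (amalgamation f J)))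
    (hloc : ∀ (m : Ideal R) (hm : m.IsMaximal), ∀ r ∈ nonZeroDivisors R,
      algebraMap S (Localization (amalgT f J m hm.isPrime)) (f r) •
          J.map (algebraMap S (Localization (amalgT f J m hm.isPrime))) =
        J.map (algebraMap S (Localization (amalgT f J m hm.isPrime))))
    {a : R} (ha : a ∈ nonZeroDivisors R) {k : S} (hk : k ∈ J) : J ≤ (f a + k) • J :=
  fun _ hj => mem_smul_of_forall_exists_mul_mem hstar hZJ fun m hm =>
    exists_mul_mem_smul_of_smul_map_eq _ (fun _ ht _ hj => add_mem_amalgT f J _ ht hj)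
      (hloc m hm a ha) hk hj

theorem ker_fst_le_span_singleton_mul [Nontrivial R] (hstar : conditionStar f J)
    (hZJ : zdivSet (amalgamation f J) ⊆
      (Ideal.jacobson (⊥ : Ideal (amalgamation f J)) : Set (amalgamation f J)))
    (hloc : ∀ (m : Ideal R) (hm : m.IsMaximal), ∀ r ∈ nonZeroDivisors R,
      algebraMap S (Localization (amalgT f J m hm.isPrime)) (f r) •
          J.map (algebraMap S (Localization (amalgT f J m hm.isPrime))) =
        J.map (algebraMap S (Localization (amalgT f J m hm.isPrime))))
    {x : amalgamation f J} (hx : x ∈ nonZeroDivisors (amalgamation f J)) :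
    RingHom.ker (fst f J) ≤ Ideal.span {x} * RingHom.ker (fst f J) := by
  intro y hy
  obtain ⟨⟨j, hj⟩, rfl⟩ := (mem_ker_fst f J).mp hy
  obtain ⟨k, hk, hx₂⟩ := x.2
  obtain ⟨j', hj', hj'j⟩ := (Submodule.mem_smul_pointwise_iff_exists _ _ _).mp
    (le_smul hstar hZJ hloc (fst_mem_nonZeroDivisors hstar hx) hk hj)
  have : inr f J ⟨j, hj⟩ = x * inr f J ⟨j', hj'⟩ :=
    Subtype.ext (Prod.ext (mul_zero _).symm (by simp [inr, hx₂, fst, ← hj'j]))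
  rw [this]
  exact Ideal.mul_mem_mul (Ideal.mem_span_singleton_self x) ((mem_ker_fst f J).mpr ⟨_, rfl⟩)

end amalgamation

theorem stmt6_general {R S : Type*} [CommRing R] [CommRing S] (f : R →+* S) (J : Ideal S)
    (hstar : conditionStar f J)
    (hZJ : zdivSet (amalgamation f J) ⊆
      (Ideal.jacobson (⊥ : Ideal (amalgamation f J)) : Set (amalgamation f J)))
    (hR : IsPruferRing R)
    (hloc : ∀ (m : Ideal R) (hm : m.IsMaximal), ∀ r ∈ nonZeroDivisors R,
      algebraMap S (Localization (amalgT f J m hm.isPrime)) (f r) •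
          J.map (algebraMap S (Localization (amalgT f J m hm.isPrime))) =
        J.map (algebraMap S (Localization (amalgT f J m hm.isPrime)))) :
    IsPruferRing (amalgamation f J) := by
  rintro I hI hIfg ⟨x, hxI, hx⟩
  obtain hR₀ | hR₀ := subsingleton_or_nontrivial R
  · have := f.codomain_trivial
    exact absurd (Subsingleton.elim I ⊥) hI
  set π := amalgamation.fst f J
  have hπ : Function.Surjective π := amalgamation.fst_surjective f J
  have ha := amalgamation.fst_mem_nonZeroDivisors hstar hx
  have hπx : π x ∈ I.map π := Ideal.mem_map_of_mem π hxI
  have : Module.Projective R (I.map π) :=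
    hR _ (Submodule.ne_bot_iff _ |>.mpr ⟨_, hπx, nonZeroDivisors.ne_zero ha⟩) (hIfg.map π)
      ⟨_, hπx, ha⟩
  obtain ⟨I₀, hI₀⟩ := Ideal.exists_mul_eq_span_singleton_of_projective hπx
  have hker := amalgamation.ker_fst_le_span_singleton_mul hstar hZJ hloc hx
  refine Ideal.projective_of_mul_eq_span_singleton (I' := I₀.comap π) hx ?_
  have hmap : (I * I₀.comap π).map π = (Ideal.span {x}).map π := by
    rw [Ideal.map_mul, Ideal.map_comap_of_surjective π hπ, hI₀, Ideal.map_span, Set.image_singleton]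
  have hker₁ : RingHom.ker π ≤ I * I₀.comap π :=
    hker.trans (Ideal.mul_mono ((Ideal.span_singleton_le_iff_mem _).mpr hxI)
      (Ideal.comap_mono bot_le))
  have hker₂ : RingHom.ker π ≤ Ideal.span {x} := hker.trans Ideal.mul_le_left
  have hsup := (Ideal.map_eq_iff_sup_ker_eq_of_surjective π hπ).mp hmap
  rwa [sup_eq_left.mpr hker₁, sup_eq_left.mpr hker₂] at hsup

theorem stmt6 {R S : Type*} [CommRing R] [CommRing S] (f : R →+* S) (J : Ideal S)
    (hJ : J ≠ ⊤) (hreg : ∀ r ∈ nonZeroDivisors R, f r ∈ nonZeroDivisors S)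
    (hstar : conditionStar f J)
    (hZJ : zdivSet (amalgamation f J) ⊆
      (Ideal.jacobson (⊥ : Ideal (amalgamation f J)) : Set (amalgamation f J)))
    (hR : IsPruferRing R)
    (hloc : ∀ (m : Ideal R) (hm : m.IsMaximal), ∀ r ∈ nonZeroDivisors R,
      algebraMap S (Localization (amalgT f J m hm.isPrime)) (f r) •
          J.map (algebraMap S (Localization (amalgT f J m hm.isPrime))) =
        J.map (algebraMap S (Localization (amalgT f J m hm.isPrime)))) :
    IsPruferRing (amalgamation f J) :=
  stmt6_general f J hstar hZJ hR hloc
end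

section
/- Let R be a commutative ring and M an R-module with Z(M) ⊆ Z(R). If the trivial extension R ⋉ M is a Prüfer ring, then R is a Prüfer ring and M_m = r·M_m for every maximal ideal m of R and every regular element r of R. -/
open Pointwise

/-- `Z(M)`: the set of elements of `R` that kill some nonzero element of `M`. -/
def zdivModSet (R M : Type*) [CommRing R] [AddCommGroup M] [Module R M] : Set R :=
  {r | ∃ m : M, m ≠ 0 ∧ r • m = 0}

/-!
Both parts come from projectivity of ideals of `R ⋉ M`. Since `Z(M) ⊆ Z(R)`, `(r, 0)` is regular
in `R ⋉ M` for every regular `r ∈ R`. For a finitely generated regular ideal `I` of `R`, the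
extended ideal `I (R ⋉ M)` is a direct summand of a free module; applying the projection
`R ⋉ M → R` to the splitting exhibits `I` as a direct summand of a free `R`-module. For `x ∈ M`,
projectivity of `((r, 0), (0, x))` yields `s, t, u` with `s (r, 0) + t (0, x) = (r, 0)` and
`(0, x) s = (r, 0) u`; the first forces `s.fst = 1`, and then the second reads `x = r • u.snd`.
Hence `M = r M`, which passes to every localization.
-/

theorem Ideal.projective_of_projective_map_s11 {R A : Type*} [CommRing R] [CommRing A]
    [Algebra R A] (π : A →ₐ[R] R) (I : Ideal R)
    [Module.Projective A (I.map (algebraMap R A))] : Module.Projective R I := by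
  set J := I.map (algebraMap R A)
  set v : I → A := fun i => algebraMap R A i
  have hJ : J = Submodule.span A (Set.range v) := by
    change Ideal.span _ = _
    rw [Set.image_eq_range]
    rfl
  let φ : (I →₀ A) →ₗ[A] J := LinearMap.codRestrict J (Finsupp.linearCombination A v)
    fun f => hJ ▸ Finsupp.range_linearCombination (R := A) (v := v) ▸ LinearMap.mem_range_self _ f
  have hφ : Function.Surjective φ := by
    rintro ⟨y, hy⟩
    rw [hJ, ← Finsupp.range_linearCombination] at hy
    obtain ⟨f, rfl⟩ := hy
    exact ⟨f, rfl⟩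
  obtain ⟨σ, hσ⟩ := Module.projective_lifting_property φ LinearMap.id hφ
  let incl : I →ₗ[R] J :=
    { toFun := fun i => ⟨algebraMap R A i, Ideal.mem_map_of_mem _ i.2⟩
      map_add' := fun i j => Subtype.ext (map_add _ _ _)
      map_smul' := fun c i => Subtype.ext (by simp [Algebra.smul_def]) }
  refine .of_split (Finsupp.mapRange.linearMap π.toLinearMap ∘ₗ σ.restrictScalars R ∘ₗ incl)
    (Finsupp.linearCombination R id) ?_
  have key : ∀ x : I, ((σ (incl x)).sum fun i a => π a * i) = x := fun x => by
    simpa [φ, incl, v, Finsupp.linearCombination_apply, map_finsuppSum] using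
      congr_arg (π ∘ Subtype.val) (LinearMap.congr_fun hσ (incl x))
  ext x
  rw [LinearMap.id_apply, ← key x]
  simp only [LinearMap.coe_comp, LinearMap.coe_restrictScalars, Function.comp_apply,
    Finsupp.mapRange.linearMap_apply, AlgHom.coe_toLinearMap, Finsupp.linearCombination_apply,
    id_eq, zero_smul, implies_true, Finsupp.sum_mapRange_index]
  simp [Finsupp.sum]

theorem Ideal.exists_eq_and_mul_eq_of_projective_span_pair {A : Type*} [CommRing A] {a b : A}
    [Module.Projective A (Ideal.span {a, b})] :
    ∃ s t u : A, s * a + t * b = a ∧ b * s = a * u := by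
  set J := Ideal.span {a, b}
  let φ : (A × A) →ₗ[A] J := LinearMap.codRestrict J
    ((LinearMap.toSpanSingleton A A a).coprod (LinearMap.toSpanSingleton A A b))
    fun p => Ideal.mem_span_pair.mpr ⟨p.1, p.2, by simp⟩
  have hφ : Function.Surjective φ := by
    rintro ⟨y, hy⟩
    obtain ⟨c, d, rfl⟩ := Ideal.mem_span_pair.mp hy
    exact ⟨(c, d), Subtype.ext (by simp [φ])⟩
  obtain ⟨σ, hσ⟩ := Module.projective_lifting_property φ LinearMap.id hφ
  let ja : J := ⟨a, Ideal.subset_span (by simp)⟩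
  let jb : J := ⟨b, Ideal.subset_span (by simp)⟩
  have hcomm : b • ja = a • jb := Subtype.ext (mul_comm b a)
  refine ⟨(σ ja).1, (σ ja).2, (σ jb).1, ?_, ?_⟩
  · simpa [φ] using congr_arg Subtype.val (LinearMap.congr_fun hσ ja)
  · simpa using congr_arg Prod.fst (congr_arg σ hcomm)

theorem isSMulRegular_of_zdivModSet_subset {R M : Type*} [CommRing R] [AddCommGroup M]
    [Module R M] (hZM : zdivModSet R M ⊆ zdivSet R) {r : R} (hr : r ∈ nonZeroDivisors R) :
    IsSMulRegular M r := by
  refine IsSMulRegular.of_right_eq_zero_of_smul fun m hm => ?_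
  by_contra hm0
  obtain ⟨b, hb, hrb⟩ := hZM ⟨m, hm0, hm⟩
  exact hb (mem_nonZeroDivisors_iff_right.mp hr b (by rwa [mul_comm]))

theorem LocalizedModule.smul_top_eq_top {R M : Type*} [CommSemiring R] [AddCommMonoid M]
    [Module R M] (S : Submonoid R) {r : R} (h : ∀ x : M, ∃ p, r • p = x) :
    r • (⊤ : Submodule R (LocalizedModule S M)) = ⊤ := by
  refine eq_top_iff.mpr fun y _ => ?_
  induction y using LocalizedModule.induction_on with
  | h x s =>
    obtain ⟨p, rfl⟩ := h x
    rw [← LocalizedModule.smul'_mk]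
    exact Submodule.smul_mem_pointwise_smul _ r ⊤ trivial

section

open TrivSqZeroExt

variable {R M : Type*} [CommRing R] [AddCommGroup M] [Module R M] [Module Rᵐᵒᵖ M]
  [IsCentralScalar R M]

theorem TrivSqZeroExt.inl_mem_nonZeroDivisors {r : R} (hr : r ∈ nonZeroDivisors R)
    (hrM : IsSMulRegular M r) :
    (inl r : TrivSqZeroExt R M) ∈ nonZeroDivisors (TrivSqZeroExt R M) := by
  rw [mem_nonZeroDivisors_iff_right] at hr ⊢
  intro z hz
  ext
  · exact hr _ (by simpa using congr_arg fst hz)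
  · exact hrM.right_eq_zero_of_smul (by simpa [op_smul_eq_smul] using congr_arg snd hz)

theorem TrivSqZeroExt.exists_smul_eq_of_projective_span_inl_inr {r : R}
    (hr : r ∈ nonZeroDivisors R) (x : M)
    [Module.Projective (TrivSqZeroExt R M) (Ideal.span {inl r, inr x})] :
    ∃ p : M, r • p = x := by
  obtain ⟨s, t, u, hsa, hbs⟩ := Ideal.exists_eq_and_mul_eq_of_projective_span_pair
    (a := (inl r : TrivSqZeroExt R M)) (b := inr x)
  have hs : s.fst = 1 := by
    rw [← mul_cancel_right_mem_nonZeroDivisors hr]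
    simpa using congr_arg fst hsa
  refine ⟨u.snd, ?_⟩
  simpa [hs, op_smul_eq_smul] using (congr_arg snd hbs).symm

theorem IsPruferRing.of_trivSqZeroExt (hZM : zdivModSet R M ⊆ zdivSet R)
    (hP : IsPruferRing (TrivSqZeroExt R M)) : IsPruferRing R := by
  rintro I hI hfg ⟨r, hrI, hr⟩
  have := hP (I.map (algebraMap R (TrivSqZeroExt R M)))
    ((Ideal.map_eq_bot_iff_of_injective inl_injective).not.mpr hI) (hfg.map _)
    ⟨inl r, Ideal.mem_map_of_mem _ hrI,
      inl_mem_nonZeroDivisors hr (isSMulRegular_of_zdivModSet_subset hZM hr)⟩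
  exact I.projective_of_projective_map_s11 (fstHom R R M)

theorem IsPruferRing.exists_smul_eq_of_trivSqZeroExt (hZM : zdivModSet R M ⊆ zdivSet R)
    (hP : IsPruferRing (TrivSqZeroExt R M)) {r : R} (hr : r ∈ nonZeroDivisors R) (x : M) :
    ∃ p : M, r • p = x := by
  rcases subsingleton_or_nontrivial R with hR | hR
  · have := Module.subsingleton R M
    exact ⟨0, Subsingleton.elim _ _⟩
  have hreg := inl_mem_nonZeroDivisors hr (isSMulRegular_of_zdivModSet_subset (M := M) hZM hr)
  have hmem : (inl r : TrivSqZeroExt R M) ∈ Ideal.span {inl r, inr x} :=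
    Ideal.subset_span (by simp)
  have := hP _ ((Submodule.ne_bot_iff _).mpr ⟨_, hmem, nonZeroDivisors.ne_zero hreg⟩)
    (Submodule.fg_span (Set.toFinite _)) ⟨_, hmem, hreg⟩
  exact exists_smul_eq_of_projective_span_inl_inr hr x

end

theorem stmt11 {R M : Type*} [CommRing R] [AddCommGroup M] [Module R M]
    [Module Rᵐᵒᵖ M] [IsCentralScalar R M]
    (hZM : zdivModSet R M ⊆ zdivSet R)
    (hP : IsPruferRing (TrivSqZeroExt R M)) :
    IsPruferRing R ∧
      ∀ (m : Ideal R) [m.IsMaximal], ∀ r ∈ nonZeroDivisors R,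
        r • (⊤ : Submodule R (LocalizedModule m.primeCompl M)) = ⊤ :=
  ⟨hP.of_trivSqZeroExt hZM, fun _ _ _ hr =>
    LocalizedModule.smul_top_eq_top _ (hP.exists_smul_eq_of_trivSqZeroExt hZM hr)⟩
end

section
/- Let R be a commutative ring and M an R-module with Z(M) ⊆ Z(R) and Z(R) ⊆ Jac(R). If R is a Prüfer ring and M_m = r·M_m for every maximal ideal m of R and every regular element r of R, then the trivial extension R ⋉ M is a Prüfer ring. -/
open Pointwise

/-!
A regular element `ρ = (r, m₀)` of an ideal `J` of `R ⋉ M` forces `r` to be regular in `R` and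
to act injectively on `M`; by the local hypothesis it also acts surjectively, so `0 ⋉ M ⊆ J` and
`J = I ⋉ M`, where `I` is the image of `J` in `R`. As a projective ideal containing `r`, `I` is
invertible: there are `tᵢ ∈ I` and `cᵢ ∈ R` with `∑ cᵢ tᵢ = r` and `r ∣ x cᵢ` for all `x ∈ I`
(the `cᵢ / r` lie in `I⁻¹`). Since `r` is invertible on `M`, the images of these elements under
`inl` satisfy the same relations for `J` and `inl r`, so `J` is invertible, hence projective.
-/

open scoped nonZeroDivisors

theorem smul_surjective_of_localization_maximal {R M : Type*} [CommSemiring R] [AddCommMonoid M]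
    [Module R M] (r : R)
    (h : ∀ (P : Ideal R) [P.IsMaximal],
      r • (⊤ : Submodule R (LocalizedModule P.primeCompl M)) = ⊤) :
    Function.Surjective (r • · : M → M) := by
  refine surjective_of_localized_maximal (DistribSMul.toLinearMap R M r) fun P _ y => ?_
  have hy : y ∈ r • (⊤ : Submodule R (LocalizedModule P.primeCompl M)) := by
    rw [h P]; trivial
  obtain ⟨x, -, rfl⟩ := (Submodule.mem_smul_pointwise_iff_exists _ _ _).mp hy
  induction x using LocalizedModule.induction_on with
  | h m s => exact ⟨LocalizedModule.mk m s, by simp [LocalizedModule.smul'_mk]⟩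

namespace Ideal

variable {A : Type*} [CommRing A]

theorem exists_finset_sum_mul_eq_of_projective (I : Ideal A) [Module.Projective A I] {r : A}
    (hr : r ∈ I) :
    ∃ (T : Finset I) (c : I → A), ∑ t ∈ T, c t * t = r ∧
      ∀ x ∈ I, ∀ t, r ∣ x * c t := by
  obtain ⟨s, hs⟩ := Module.projective_def.mp ‹Module.Projective A I›
  refine ⟨(s ⟨r, hr⟩).support, s ⟨r, hr⟩, ?_, fun x hx t => ⟨s ⟨x, hx⟩ t, ?_⟩⟩
  · simpa [Finsupp.linearCombination_apply, Finsupp.sum] using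
      congrArg Subtype.val (hs ⟨r, hr⟩)
  · have hcomm : x • (⟨r, hr⟩ : I) = r • ⟨x, hx⟩ := Subtype.ext (mul_comm x r)
    calc x * s ⟨r, hr⟩ t = s (x • ⟨r, hr⟩) t := by
          rw [map_smul, Finsupp.smul_apply, smul_eq_mul]
      _ = r * s ⟨x, hx⟩ t := by rw [hcomm, map_smul, Finsupp.smul_apply, smul_eq_mul]

theorem projective_of_sum_mul_eq (I : Ideal A) {r : A} (hr : r ∈ A⁰)
    {ι : Type*} [Fintype ι] (t c : ι → A) (ht : ∀ i, t i ∈ I) (hsum : ∑ i, c i * t i = r)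
    (hdvd : ∀ x ∈ I, ∀ i, r ∣ x * c i) : Module.Projective A I := by
  let e := LinearEquiv.ofInjective (LinearMap.mulLeft A r)
    fun a b h => (mul_cancel_left_mem_nonZeroDivisors hr).mp h
  -- `f i x = x * c i / r`, the dual basis of `I` against the generators `t i`
  let f : ι → I →ₗ[A] A := fun i => e.symm.toLinearMap ∘ₗ
    (LinearMap.mulRight A (c i) ∘ₗ I.subtype).codRestrict _ fun x =>
      let ⟨q, hq⟩ := hdvd x x.2 i; ⟨q, hq.symm⟩
  have hf : ∀ i x, r * f i x = x * c i := fun i x =>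
    congrArg Subtype.val (e.apply_symm_apply _)
  refine Module.Projective.of_split (LinearMap.pi f)
    (Fintype.linearCombination A fun i => ⟨t i, ht i⟩) (LinearMap.ext fun x => Subtype.ext ?_)
  refine (mul_cancel_left_mem_nonZeroDivisors hr).mp ?_
  simp only [LinearMap.comp_apply, Fintype.linearCombination_apply, LinearMap.pi_apply,
    Submodule.coe_sum, Submodule.coe_smul, smul_eq_mul, LinearMap.id_apply, Finset.mul_sum]
  calc ∑ i, r * (f i x * t i) = ∑ i, x * (c i * t i) := by simp only [← mul_assoc, hf]
    _ = r * x := by rw [← Finset.mul_sum, hsum, mul_comm]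

end Ideal

namespace TrivSqZeroExt

variable {R M : Type*} [CommRing R] [AddCommGroup M] [Module R M] [Module Rᵐᵒᵖ M]
  [IsCentralScalar R M]

theorem inr_mul_eq_inr_fst_smul (m : M) (x : TrivSqZeroExt R M) :
    inr m * x = inr (x.fst • m) := by
  ext <;> simp [op_smul_eq_smul]

theorem smul_injective_fst_of_mem_nonZeroDivisors {x : TrivSqZeroExt R M}
    (hx : x ∈ (TrivSqZeroExt R M)⁰) : Function.Injective (x.fst • · : M → M) := by
  refine (injective_iff_map_eq_zero (DistribSMul.toAddMonoidHom M x.fst)).mpr fun m hm => ?_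
  have : inr m * x = 0 := by
    rw [inr_mul_eq_inr_fst_smul, show x.fst • m = 0 from hm, inr_zero]
  exact inr_injective ((mul_right_mem_nonZeroDivisors_eq_zero_iff hx).mp this)

theorem fst_mem_nonZeroDivisors {x : TrivSqZeroExt R M}
    (hx : x ∈ (TrivSqZeroExt R M)⁰) : x.fst ∈ R⁰ := by
  refine mem_nonZeroDivisors_iff_right.mpr fun b hb => ?_
  have hbx : b • x.snd = 0 := smul_injective_fst_of_mem_nonZeroDivisors hx <| by
    show x.fst • b • x.snd = x.fst • 0
    rw [smul_zero, smul_smul, mul_comm, hb, zero_smul]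
  have : inl b * x = 0 := by ext <;> simp [hb, hbx]
  simpa using congrArg fst ((mul_right_mem_nonZeroDivisors_eq_zero_iff hx).mp this)

theorem fst_ne_zero_of_mem_nonZeroDivisors [Nontrivial (TrivSqZeroExt R M)]
    {x : TrivSqZeroExt R M} (hx : x ∈ (TrivSqZeroExt R M)⁰) : x.fst ≠ 0 := by
  intro h
  have : x * x = 0 := by ext <;> simp [h]
  exact nonZeroDivisors.ne_zero hx ((mul_right_mem_nonZeroDivisors_eq_zero_iff hx).mp this)

theorem inl_mem_nonZeroDivisors_s12 {r : R} (hr : r ∈ R⁰)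
    (hinj : Function.Injective (r • · : M → M)) : inl r ∈ (TrivSqZeroExt R M)⁰ := by
  refine mem_nonZeroDivisors_iff_right.mpr fun x hx => ?_
  have h1 : x.fst * r = 0 := by simpa using congrArg fst hx
  have h2 : r • x.snd = 0 := by simpa [op_smul_eq_smul] using congrArg snd hx
  ext
  · exact (mul_right_mem_nonZeroDivisors_eq_zero_iff hr).mp h1
  · exact hinj (by simpa using h2)

theorem inr_mem_of_smul_surjective {J : Ideal (TrivSqZeroExt R M)} {x : TrivSqZeroExt R M}
    (hx : x ∈ J) (hsurj : Function.Surjective (x.fst • · : M → M)) (m : M) :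
    inr m ∈ J := by
  obtain ⟨m', rfl⟩ := hsurj m
  rw [← inr_mul_eq_inr_fst_smul]
  exact J.mul_mem_left _ hx

theorem inl_mem_of_mem_map_fstHom {J : Ideal (TrivSqZeroExt R M)} (hM : ∀ m, inr m ∈ J) {a : R}
    (ha : a ∈ J.map (fstHom R R M)) : inl a ∈ J := by
  obtain ⟨x, hx, rfl⟩ := (Ideal.mem_map_iff_of_surjective _ fst_surjective).mp ha
  have : x - inr x.snd = inl x.fst := by ext <;> simp
  exact this ▸ J.sub_mem hx (hM x.snd)

theorem inl_dvd_mul_inl {r c : R} {x : TrivSqZeroExt R M} (hdvd : r ∣ x.fst * c)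
    (hsurj : Function.Surjective (r • · : M → M)) : inl r ∣ x * inl c := by
  obtain ⟨q, hq⟩ := hdvd
  obtain ⟨m, hm⟩ := hsurj (c • x.snd)
  refine ⟨inl q + inr m, ?_⟩
  ext
  · simpa using hq
  · simpa [op_smul_eq_smul] using hm.symm

end TrivSqZeroExt

open TrivSqZeroExt in
theorem stmt12_general {R M : Type*} [CommRing R] [AddCommGroup M] [Module R M]
    [Module Rᵐᵒᵖ M] [IsCentralScalar R M]
    (hR : IsPruferRing R)
    (hloc : ∀ (m : Ideal R) [m.IsMaximal], ∀ r ∈ nonZeroDivisors R,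
      r • (⊤ : Submodule R (LocalizedModule m.primeCompl M)) = ⊤) :
    IsPruferRing (TrivSqZeroExt R M) := by
  intro J hJ0 hJfg ⟨ρ, hρJ, hρ⟩
  obtain ⟨y, -, hy0⟩ := (Submodule.ne_bot_iff J).mp hJ0
  have : Nontrivial (TrivSqZeroExt R M) := nontrivial_of_ne y 0 hy0
  set r := ρ.fst
  have hrR : r ∈ nonZeroDivisors R := fst_mem_nonZeroDivisors hρ
  have hsurj : Function.Surjective (r • · : M → M) :=
    smul_surjective_of_localization_maximal r fun P _ => hloc P r hrR
  have hMJ : ∀ m, inr m ∈ J := inr_mem_of_smul_surjective hρJ hsurj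
  set I := J.map (fstHom R R M)
  have hrI : r ∈ I := Ideal.mem_map_of_mem _ hρJ
  have hI0 : I ≠ ⊥ :=
    (Submodule.ne_bot_iff I).mpr ⟨r, hrI, fst_ne_zero_of_mem_nonZeroDivisors hρ⟩
  have := hR I hI0 (hJfg.map _) ⟨r, hrI, hrR⟩
  obtain ⟨T, c, hsum, hdvd⟩ := I.exists_finset_sum_mul_eq_of_projective hrI
  refine J.projective_of_sum_mul_eq
    (inl_mem_nonZeroDivisors_s12 hrR (smul_injective_fst_of_mem_nonZeroDivisors hρ))
    (fun t : T => inl (t : I)) (fun t => inl (c t))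
    (fun t => inl_mem_of_mem_map_fstHom hMJ (t : I).2) ?_
    (fun x hx t => inl_dvd_mul_inl (hdvd x.fst (Ideal.mem_map_of_mem _ hx) t) hsurj)
  simp_rw [← inl_mul, ← inl_sum, Finset.sum_coe_sort T fun t => c t * t, hsum]

theorem stmt12 {R M : Type*} [CommRing R] [AddCommGroup M] [Module R M]
    [Module Rᵐᵒᵖ M] [IsCentralScalar R M]
    (hZM : zdivModSet R M ⊆ zdivSet R)
    (hZJ : zdivSet R ⊆ (Ideal.jacobson (⊥ : Ideal R) : Set R))
    (hR : IsPruferRing R)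
    (hloc : ∀ (m : Ideal R) [m.IsMaximal], ∀ r ∈ nonZeroDivisors R,
      r • (⊤ : Submodule R (LocalizedModule m.primeCompl M)) = ⊤) :
    IsPruferRing (TrivSqZeroExt R M) :=
  stmt12_general hR hloc
end

section
/- Let R be a commutative ring that is either an integral domain or a local ring, and let M be a torsion-free R-module (every regular element of R acts injectively on M). Then the trivial extension R ⋉ M is a Prüfer ring if and only if R is a Prüfer ring and M_m = r·M_m for every maximal ideal m of R and every regular element r of R. -/
open Pointwise

/-!
For an ideal `I` containing a regular element `r`, projectivity of `I` is equivalent to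
`r ∈ (rR : I) * I`: a splitting of `I` is determined by its value at `r`, whose coefficients lie
in `(rR : I)`, and conversely such a relation can be divided by `r`. This invertibility criterion
moves along `inl : R → R ⋉ M` and `fst : R ⋉ M → R`. If `R ⋉ M` is Prüfer, applying it to
`I ⋉ IM` shows that `R` is Prüfer, and applying it to the ideal generated by `(r, 0)` and `(0, x)`
shows `x ∈ rM`. Conversely, if `M` is divisible by regular elements, a regular ideal `J` of `R ⋉ M`
contains `0 ⋉ M`, so `J = I ⋉ M` with `I = fst J`, and the criterion lifts from `I` to `J`.
Divisibility by `r` is surjectivity of `r • ·`, which is a local property.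
-/

open Submodule TrivSqZeroExt
open scoped nonZeroDivisors

local notation "tsze" => TrivSqZeroExt

section RegularIdeal

variable {R : Type*} [CommRing R] {I : Ideal R} {r : R}

theorem Ideal.mem_colon_mul_of_projective [Module.Projective R I] (hrI : r ∈ I) :
    r ∈ (Ideal.span {r}).colon (I : Set R) * I := by
  obtain ⟨s, hs⟩ := Module.projective_def.mp ‹Module.Projective R I›
  have hsum : (s ⟨r, hrI⟩).sum (fun z t => t * (z : R)) = r := by
    simpa [Finsupp.linearCombination_apply, Finsupp.sum] using congrArg Subtype.val (hs ⟨r, hrI⟩)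
  have hcoeff (z : I) : s ⟨r, hrI⟩ z ∈ (Ideal.span {r}).colon (I : Set R) := by
    refine mem_colon.mpr fun b hb => Ideal.mem_span_singleton'.mpr ⟨s ⟨b, hb⟩ z, ?_⟩
    have hswap : b • (⟨r, hrI⟩ : I) = r • ⟨b, hb⟩ := Subtype.ext (mul_comm _ _)
    have := congrArg (· z) (congrArg s hswap)
    simp only [map_smul, Finsupp.smul_apply, smul_eq_mul] at this ⊢
    linear_combination -this
  have hmem : (s ⟨r, hrI⟩).sum (fun z t => t * (z : R)) ∈ (Ideal.span {r}).colon (I : Set R) * I :=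
    Submodule.finsuppSum_mem _ _ _ _ fun z _ => mul_mem_mul (hcoeff z) z.2
  rwa [hsum] at hmem

theorem Ideal.exists_linearMap_mul_eq_mul (hr : r ∈ R⁰) {a : R}
    (ha : a ∈ (Ideal.span {r}).colon (I : Set R)) :
    ∃ g : I →ₗ[R] R, ∀ b : I, r * g b = a * b := by
  obtain ⟨e, he⟩ : ∃ e : R ≃ₗ[R] Ideal.span {r}, ∀ t, (e t : R) = t * r :=
    ⟨.ofInjective _ (fun _ _ h => (mul_cancel_right_mem_nonZeroDivisors hr).mp h) ≪≫ₗ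
      .ofEq _ _ (LinearMap.span_singleton_eq_range R R r).symm, fun _ => rfl⟩
  have hmem (b : I) : a * b ∈ Ideal.span {r} := mem_colon.mp ha b b.2
  refine ⟨e.symm ∘ₗ (LinearMap.mulLeft R a ∘ₗ I.subtype).codRestrict _ hmem, fun b => ?_⟩
  rw [mul_comm, ← he, LinearMap.comp_apply, LinearEquiv.coe_coe, e.apply_symm_apply]
  rfl

theorem Ideal.projective_of_mem_colon_mul (hr : r ∈ R⁰)
    (h : r ∈ (Ideal.span {r}).colon (I : Set R) * I) : Module.Projective R I := by
  -- `f` is `u / r` times a splitting of `I`.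
  have key : ∀ u ∈ (Ideal.span {r}).colon (I : Set R) * I, ∃ f : I →ₗ[R] I →₀ R,
      ∀ b : I, r * Finsupp.linearCombination R Subtype.val (f b) = u * b := by
    intro u hu
    refine Submodule.mul_induction_on hu (fun a ha z hz => ?_) fun u v ⟨f, hf⟩ ⟨f', hf'⟩ => ?_
    · obtain ⟨g, hg⟩ := exists_linearMap_mul_eq_mul hr ha
      refine ⟨Finsupp.lsingle ⟨z, hz⟩ ∘ₗ g, fun b => ?_⟩
      simp only [LinearMap.comp_apply, Finsupp.lsingle_apply, Finsupp.linearCombination_single,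
        smul_eq_mul, ← mul_assoc, hg]
      ring
    · exact ⟨f + f', fun b => by simp [mul_add, add_mul, hf, hf']⟩
  obtain ⟨f, hf⟩ := key r h
  refine Module.projective_def.mpr ⟨f, fun b => Subtype.ext ?_⟩
  rw [← mul_cancel_left_mem_nonZeroDivisors hr, ← hf b, ← I.subtype_apply,
    Finsupp.apply_linearCombination]
  rfl

end RegularIdeal

theorem IsPruferRing.projective {A : Type*} [CommRing A] (h : IsPruferRing A) {I : Ideal A}
    (hfg : I.FG) {r : A} (hrI : r ∈ I) (hr : r ∈ A⁰) : Module.Projective A I := by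
  nontriviality A
  exact h I (Submodule.ne_bot_iff I |>.mpr ⟨r, hrI, nonZeroDivisors.ne_zero hr⟩) hfg ⟨r, hrI, hr⟩

section Divisibility

variable {R M : Type*} [CommRing R] [AddCommGroup M] [Module R M]

theorem Submodule.smul_top_eq_top_iff_surjective (r : R) :
    r • (⊤ : Submodule R M) = ⊤ ↔ Function.Surjective (r • LinearMap.id : M →ₗ[R] M) := by
  rw [pointwise_smul_def, map_top, LinearMap.range_eq_top]
  rfl

theorem Submodule.smul_top_eq_top_iff_forall_isMaximal (r : R) :
    r • (⊤ : Submodule R M) = ⊤ ↔ ∀ (m : Ideal R) [m.IsMaximal],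
      r • (⊤ : Submodule R (LocalizedModule m.primeCompl M)) = ⊤ := by
  have hmap (S : Submonoid R) : LocalizedModule.map S (r • LinearMap.id : M →ₗ[R] M) =
      r • LinearMap.id := by
    rw [map_smul, LocalizedModule.map_id]
  simp only [smul_top_eq_top_iff_surjective]
  refine ⟨fun h m _ => ?_, fun h => surjective_of_localized_maximal _ fun m _ => ?_⟩
  · have hm := LocalizedModule.map_surjective m.primeCompl _ h
    rw [hmap] at hm
    exact hm
  · rw [hmap]
    exact h m

end Divisibility

section TrivSqZeroExt

variable {R M : Type*} [CommRing R] [AddCommGroup M] [Module R M] [Module Rᵐᵒᵖ M]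
  [IsCentralScalar R M]

theorem TrivSqZeroExt.inl_mem_nonZeroDivisors_s13 {r : R} (hr : r ∈ R⁰)
    (hrM : Function.Injective fun x : M => r • x) : (inl r : tsze R M) ∈ (tsze R M)⁰ := by
  refine mem_nonZeroDivisors_iff_right.mpr fun w hw => ?_
  have hfst : fst w * r = 0 := by simpa using congrArg fst hw
  have hsnd : r • snd w = r • 0 := by simpa using congrArg snd hw
  exact TrivSqZeroExt.ext (by simpa using mem_nonZeroDivisors_iff_right.mp hr _ hfst) (hrM hsnd)

theorem TrivSqZeroExt.fst_mem_nonZeroDivisors_s13 {z : tsze R M} (hz : z ∈ (tsze R M)⁰) :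
    fst z ∈ R⁰ := by
  refine mem_nonZeroDivisors_iff_right.mpr fun s hs => ?_
  have hsM (x : M) : s • x = 0 := by
    have h : inr (s • x) * z = 0 := by ext <;> simp [smul_smul, hs]
    simpa using congrArg snd (mem_nonZeroDivisors_iff_right.mp hz _ h)
  have h : inl s * z = 0 := by ext <;> simp [hs, hsM]
  simpa using congrArg fst (mem_nonZeroDivisors_iff_right.mp hz _ h)

theorem TrivSqZeroExt.eq_comap_map_fstHom {J : Ideal (tsze R M)} (hJ : ∀ x : M, inr x ∈ J) :
    J = (J.map (fstHom R R M)).comap (fstHom R R M) := by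
  rw [Ideal.comap_map_of_surjective _ (fun t => ⟨inl t, rfl⟩), left_eq_sup]
  intro w hw
  have hw' : w = inr (snd w) := by ext <;> simp_all
  exact hw' ▸ hJ _

theorem TrivSqZeroExt.map_fstHom_colon_le (J : Ideal (tsze R M)) (r : R) :
    ((Ideal.span {inl r}).colon (J : Set (tsze R M))).map (fstHom R R M) ≤
      (Ideal.span {r}).colon (J.map (fstHom R R M) : Set R) := by
  refine Ideal.map_le_iff_le_comap.mpr fun α hα => mem_colon.mpr fun b hb => ?_
  obtain ⟨w, hw, rfl⟩ := (Ideal.mem_map_iff_of_surjective _ fun t => ⟨inl t, rfl⟩).mp hb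
  obtain ⟨β, hβ⟩ := Ideal.mem_span_singleton'.mp (mem_colon.mp hα w hw)
  exact Ideal.mem_span_singleton'.mpr ⟨fst β, by simpa using congrArg fst hβ⟩

theorem TrivSqZeroExt.map_inlHom_colon_le (I : Ideal R) {r : R}
    (hr : ∀ x : M, ∃ y, r • y = x) :
    ((Ideal.span {r}).colon (I : Set R)).map (inlHom R M) ≤
      (Ideal.span {inl r}).colon (I.comap (fstHom R R M) : Set (tsze R M)) := by
  refine Ideal.map_le_iff_le_comap.mpr fun a ha => mem_colon.mpr fun w hw => ?_
  obtain ⟨t, ht⟩ := Ideal.mem_span_singleton'.mp (mem_colon.mp ha _ hw)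
  obtain ⟨n, hn⟩ := hr (a • snd w)
  refine Ideal.mem_span_singleton'.mpr ⟨inl t + inr n, ?_⟩
  ext <;> simp [ht, hn]

theorem IsPruferRing.of_trivSqZeroExt_s13
    (htf : ∀ r ∈ R⁰, Function.Injective fun x : M => r • x)
    (h : IsPruferRing (tsze R M)) : IsPruferRing R := by
  rintro I - hfg ⟨r, hrI, hr⟩
  let J := I.map (inlHom R M)
  have hrJ : inl r ∈ J := Ideal.mem_map_of_mem _ hrI
  have := h.projective (hfg.map _) hrJ (inl_mem_nonZeroDivisors_s13 hr (htf r hr))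
  have hJ : J.map (fstHom R R M) = I := by
    change Ideal.map (fstHom R R M : tsze R M →+* R) (I.map (inlHom R M)) = I
    rw [Ideal.map_map]
    exact Ideal.map_id I
  have hr' := Ideal.mem_map_of_mem (fstHom R R M) (Ideal.mem_colon_mul_of_projective hrJ)
  rw [Ideal.map_mul] at hr'
  refine Ideal.projective_of_mem_colon_mul hr ?_
  rw [← hJ]
  exact Ideal.mul_mono (map_fstHom_colon_le J r) le_rfl hr'

theorem IsPruferRing.smul_top_eq_top_of_trivSqZeroExt (h : IsPruferRing (tsze R M)) {r : R}
    (hr : r ∈ R⁰) (hrM : Function.Injective fun x : M => r • x) :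
    r • (⊤ : Submodule R M) = ⊤ := by
  refine eq_top_iff.mpr fun x _ => ?_
  let J : Ideal (tsze R M) := Ideal.span {inl r, inr x}
  have hrJ : inl r ∈ J := Ideal.subset_span (by simp)
  have := h.projective (fg_span (Set.toFinite _)) hrJ (inl_mem_nonZeroDivisors_s13 hr hrM)
  let K := ((Ideal.span {inl r}).colon (J : Set (tsze R M))).map (fstHom R R M)
  have hK : K ≤ (r • ⊤ : Submodule R M).colon {x} := by
    refine Ideal.map_le_iff_le_comap.mpr fun α hα => mem_colon_singleton.mpr ?_
    obtain ⟨β, hβ⟩ := Ideal.mem_span_singleton'.mp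
      (mem_colon.mp hα _ (Ideal.subset_span (by simp) : inr x ∈ J))
    have hx : fst α • x = r • snd β := by simpa using (congrArg snd hβ).symm
    rw [fstHom_apply, hx]
    exact smul_mem_pointwise_smul _ _ _ trivial
  have hJ : J.map (fstHom R R M) ≤ Ideal.span {r} := by
    refine Ideal.map_le_iff_le_comap.mpr (Ideal.span_le.mpr ?_)
    simp [Set.insert_subset_iff]
  have hr' := Ideal.mem_map_of_mem (fstHom R R M) (Ideal.mem_colon_mul_of_projective hrJ)
  rw [Ideal.map_mul, fstHom_apply, fst_inl] at hr'
  obtain ⟨k, hk, hkr⟩ := Ideal.mem_mul_span_singleton.mp (Ideal.mul_mono_right hJ hr')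
  obtain rfl : k = 1 := (mul_cancel_right_mem_nonZeroDivisors hr).mp (hkr.trans (one_mul r).symm)
  simpa using mem_colon_singleton.mp (hK hk)

theorem IsPruferRing.trivSqZeroExt
    (htf : ∀ r ∈ R⁰, Function.Injective fun x : M => r • x) (hR : IsPruferRing R)
    (hdiv : ∀ r ∈ R⁰, r • (⊤ : Submodule R M) = ⊤) : IsPruferRing (tsze R M) := by
  rintro J - hfg ⟨z, hzJ, hz⟩
  have hr : fst z ∈ R⁰ := fst_mem_nonZeroDivisors_s13 hz
  have hdivr (x : M) : ∃ y, fst z • y = x := by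
    have hx : x ∈ fst z • (⊤ : Submodule R M) := by rw [hdiv _ hr]; trivial
    simpa using (mem_smul_pointwise_iff_exists x _ _).mp hx
  have hinr (x : M) : inr x ∈ J := by
    obtain ⟨y, rfl⟩ := hdivr x
    have hy : inr (fst z • y) = inr y * z := by ext <;> simp
    exact hy ▸ J.mul_mem_left _ hzJ
  let I := J.map (fstHom R R M)
  have hrI : fst z ∈ I := Ideal.mem_map_of_mem _ hzJ
  have : Module.Projective R I := hR.projective (hfg.map _) hrI hr
  have hr' := Ideal.mem_map_of_mem (inlHom R M) (Ideal.mem_colon_mul_of_projective hrI)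
  rw [Ideal.map_mul] at hr'
  have hIJ : I.map (inlHom R M) ≤ I.comap (fstHom R R M) :=
    Ideal.map_le_iff_le_comap.mpr fun b hb => by simpa using hb
  refine Ideal.projective_of_mem_colon_mul (inl_mem_nonZeroDivisors_s13 hr (htf _ hr)) ?_
  rw [eq_comap_map_fstHom hinr]
  exact Ideal.mul_mono (map_inlHom_colon_le I hdivr) hIJ hr'

end TrivSqZeroExt

theorem stmt13_general {R M : Type*} [CommRing R] [AddCommGroup M] [Module R M]
    [Module Rᵐᵒᵖ M] [IsCentralScalar R M]
    (htf : ∀ r ∈ nonZeroDivisors R, Function.Injective fun x : M => r • x) :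
    IsPruferRing (TrivSqZeroExt R M) ↔
      (IsPruferRing R ∧
        ∀ (m : Ideal R) [m.IsMaximal], ∀ r ∈ nonZeroDivisors R,
          r • (⊤ : Submodule R (LocalizedModule m.primeCompl M)) = ⊤) := by
  have hlocal : (∀ (m : Ideal R) [m.IsMaximal], ∀ r ∈ R⁰,
      r • (⊤ : Submodule R (LocalizedModule m.primeCompl M)) = ⊤) ↔
      ∀ r ∈ R⁰, r • (⊤ : Submodule R M) = ⊤ :=
    ⟨fun h r hr => (smul_top_eq_top_iff_forall_isMaximal r).mpr fun m _ => h m r hr,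
      fun h m _ r hr => (smul_top_eq_top_iff_forall_isMaximal r).mp (h r hr) m⟩
  rw [hlocal]
  exact ⟨fun h => ⟨h.of_trivSqZeroExt_s13 htf,
      fun r hr => h.smul_top_eq_top_of_trivSqZeroExt hr (htf r hr)⟩,
    fun ⟨hR, hdiv⟩ => hR.trivSqZeroExt htf hdiv⟩

theorem stmt13 {R M : Type*} [CommRing R] [AddCommGroup M] [Module R M]
    [Module Rᵐᵒᵖ M] [IsCentralScalar R M]
    (hR : IsDomain R ∨ IsLocalRing R)
    (htf : ∀ r ∈ nonZeroDivisors R, Function.Injective fun x : M => r • x) :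
    IsPruferRing (TrivSqZeroExt R M) ↔
      (IsPruferRing R ∧
        ∀ (m : Ideal R) [m.IsMaximal], ∀ r ∈ nonZeroDivisors R,
          r • (⊤ : Submodule R (LocalizedModule m.primeCompl M)) = ⊤) :=
  stmt13_general htf
end

section
/- Let R and S be commutative rings with unity, f : R → S a ring homomorphism, and J a proper ideal of S with J ⊆ Jac(S). Assume R ⋈^f J satisfies condition ★. If R is a total ring of quotients, then so is R ⋈^f J. -/
open Pointwise

/-- A commutative ring is a total ring of quotients if every regular element is a unit. -/
def IsTotalRingOfQuotients (A : Type*) [CommRing A] : Prop :=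
  ∀ a : A, a ∈ nonZeroDivisors A → IsUnit a

theorem mem_nonZeroDivisors_iff_notMem_zdivSet {A : Type*} [CommRing A] {a : A} :
    a ∈ nonZeroDivisors A ↔ a ∉ zdivSet A := by
  simp only [mem_nonZeroDivisors_iff_left, zdivSet, Set.mem_ofPred_eq, not_exists, not_and,
    not_imp_not]

theorem isUnit_add_of_mem_jacobson_bot {S : Type*} [CommRing S] {a j : S} (ha : IsUnit a)
    (hj : j ∈ Ideal.jacobson (⊥ : Ideal S)) : IsUnit (a + j) := by
  obtain ⟨u, rfl⟩ := ha
  have hfactor : (j * ↑u⁻¹ + 1) * u = ↑u + j := by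
    rw [add_mul, mul_assoc, Units.inv_mul, mul_one, one_mul, add_comm]
  exact hfactor ▸ (Ideal.mem_jacobson_bot.mp hj _).mul u.isUnit

namespace amalgamation

variable {R S : Type*} [CommRing R] [CommRing S] {f : R →+* S} {J : Ideal S}

theorem mem_iff {p : R × S} : p ∈ amalgamation f J ↔ p.2 - f p.1 ∈ J :=
  ⟨fun ⟨j, hj, h⟩ => by rwa [h, add_sub_cancel_left],
    fun h => ⟨_, h, (add_sub_cancel _ _).symm⟩⟩

theorem isUnit_of_isUnit_fst_of_isUnit_snd {x : amalgamation f J}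
    (h₁ : IsUnit (x : R × S).1) (h₂ : IsUnit (x : R × S).2) : IsUnit x := by
  obtain ⟨⟨r, s⟩, hx⟩ := x
  obtain ⟨u, rfl⟩ := h₁
  obtain ⟨w, rfl⟩ := h₂
  have hinv : ((↑u⁻¹ : R), (↑w⁻¹ : S)) ∈ amalgamation f J := by
    rw [mem_iff] at hx ⊢
    have hfu : f ↑u⁻¹ * f ↑u = 1 := by rw [← map_mul, Units.inv_mul, map_one]
    have hdiff : (↑w⁻¹ : S) - f ↑u⁻¹ = -(↑w⁻¹ * f ↑u⁻¹ * (↑w - f ↑u)) := by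
      linear_combination -(↑w⁻¹ : S) * hfu + f ↑u⁻¹ * w.inv_mul
    rw [hdiff]
    exact J.neg_mem (J.mul_mem_left _ hx)
  exact IsUnit.of_mul_eq_one ⟨_, hinv⟩ (Subtype.ext (Prod.ext u.mul_inv w.mul_inv))

theorem isUnit_snd_of_isUnit_fst (hJ : J ≤ Ideal.jacobson ⊥) {p : R × S}
    (hp : p ∈ amalgamation f J) (h₁ : IsUnit p.1) : IsUnit p.2 := by
  obtain ⟨j, hj, h⟩ := hp
  exact h ▸ isUnit_add_of_mem_jacobson_bot (h₁.map f) (hJ hj)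

theorem isUnit_of_isUnit_fst (hJ : J ≤ Ideal.jacobson ⊥) {x : amalgamation f J}
    (h₁ : IsUnit (x : R × S).1) : IsUnit x :=
  isUnit_of_isUnit_fst_of_isUnit_snd h₁ (isUnit_snd_of_isUnit_fst hJ x.2 h₁)

end amalgamation

theorem stmt15_general {R S : Type*} [CommRing R] [CommRing S] (f : R →+* S) (J : Ideal S)
    (hJjac : J ≤ Ideal.jacobson (⊥ : Ideal S))
    (hstar : conditionStar f J)
    (hR : IsTotalRingOfQuotients R) :
    IsTotalRingOfQuotients (amalgamation f J) := by
  intro x hx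
  have hx₁ : (x : R × S).1 ∉ zdivSet R := fun h =>
    mem_nonZeroDivisors_iff_notMem_zdivSet.mp hx ((hstar x).mpr (Or.inl h))
  exact amalgamation.isUnit_of_isUnit_fst hJjac
    (hR _ (mem_nonZeroDivisors_iff_notMem_zdivSet.mpr hx₁))

theorem stmt15 {R S : Type*} [CommRing R] [CommRing S] (f : R →+* S) (J : Ideal S)
    (hJ : J ≠ ⊤) (hJjac : J ≤ Ideal.jacobson (⊥ : Ideal S))
    (hstar : conditionStar f J)
    (hR : IsTotalRingOfQuotients R) :
    IsTotalRingOfQuotients (amalgamation f J) :=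
  stmt15_general f J hJjac hstar hR
end

section
/- Let R and S be commutative rings with unity, f : R → S a ring homomorphism, and J a nonzero proper ideal of S. If the amalgamation R ⋈^f J is a chain ring, then R is a valuation domain (an integral domain that is a chain ring) and J = (f(a)+j)·J for every nonzero a ∈ R and every j ∈ J. Conversely, if J is a uniserial R-module (via f), R is a valuation domain, and J = (f(a)+j)·J for every nonzero a ∈ R and every j ∈ J, then R ⋈^f J is a chain ring. -/
open Pointwise

/-- A commutative ring is a chain ring if its ideals are totally ordered by inclusion. -/
def IsChainRing (A : Type*) [CommRing A] : Prop :=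
  ∀ I I' : Ideal A, I ≤ I' ∨ I' ≤ I

/-- Element-wise divisibility criterion for chain rings. -/
lemma chain_iff_div {A : Type*} [CommRing A] :
    IsChainRing A ↔ ∀ x y : A, (∃ z, y = z * x) ∨ (∃ z, x = z * y) := by
  constructor
  · intro h x y
    rcases h (Ideal.span {x}) (Ideal.span {y}) with h' | h'
    · right
      obtain ⟨z, hz⟩ := Ideal.mem_span_singleton'.1 (h' (Ideal.mem_span_singleton_self x))
      exact ⟨z, hz.symm⟩
    · left
      obtain ⟨z, hz⟩ := Ideal.mem_span_singleton'.1 (h' (Ideal.mem_span_singleton_self y))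
      exact ⟨z, hz.symm⟩
  · intro h I I'
    by_cases hle : I ≤ I'
    · exact Or.inl hle
    · right
      obtain ⟨x, hxI, hxI'⟩ := Set.not_subset.1 hle
      intro y hy
      rcases h x y with ⟨z, hz⟩ | ⟨z, hz⟩
      · rw [hz]; exact I.mul_mem_left z hxI
      · exact absurd (hz ▸ I'.mul_mem_left z hy) hxI'

/-- Constructor for elements of the amalgamation. -/
def amk {R S : Type*} [CommRing R] [CommRing S] (f : R →+* S) (J : Ideal S)
    (r : R) (s : S) (hs : s ∈ J) : amalgamation f J :=
  ⟨(r, f r + s), s, hs, rfl⟩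

lemma mem_smul_ideal_iff {S : Type*} [CommRing S] (J : Ideal S) (s m : S) :
    m ∈ s • J ↔ ∃ n ∈ J, s * n = m := by
  constructor
  · intro h
    rw [← SetLike.mem_coe, Submodule.coe_pointwise_smul] at h
    obtain ⟨n, hn, hns⟩ := Set.mem_smul_set.mp h
    exact ⟨n, hn, hns⟩
  · rintro ⟨n, hn, rfl⟩
    exact Submodule.smul_mem_pointwise_smul n s J hn

lemma amk_eq_mul {R S : Type*} [CommRing R] [CommRing S] {f : R →+* S} {J : Ideal S}
    {r b a : R} {ls la lb : S} (hs : ls ∈ J) (ha : la ∈ J) (hb : lb ∈ J)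
    (h1 : b = r * a) (h2 : f b + lb = (f r + ls) * (f a + la)) :
    (amk f J b lb hb) = (amk f J r ls hs) * (amk f J a la ha) := by
  apply Subtype.ext
  apply Prod.ext
  · exact h1
  · exact h2

theorem stmt18 {R S : Type*} [CommRing R] [CommRing S] (f : R →+* S) (J : Ideal S)
    (hJ0 : J ≠ ⊥) (hJ : J ≠ ⊤) :
    (IsChainRing (amalgamation f J) →
      ((IsDomain R ∧ IsChainRing R) ∧
        ∀ a : R, a ≠ 0 → ∀ j ∈ J, (f a + j) • J = J)) ∧
    ((letI : Module R J := Module.compHom J f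
      ∀ N L : Submodule R J, N ≤ L ∨ L ≤ N) →
      (IsDomain R ∧ IsChainRing R) →
      (∀ a : R, a ≠ 0 → ∀ j ∈ J, (f a + j) • J = J) →
      IsChainRing (amalgamation f J)) := by
  classical
  constructor
  · intro hC
    have hdiv := chain_iff_div.mp hC
    -- S is nontrivial
    have hSnt : Nontrivial S := by
      rcases subsingleton_or_nontrivial S with hs | hs
      · exact absurd (Ideal.eq_top_iff_one J |>.2 (Subsingleton.elim (1 : S) 0 ▸ J.zero_mem)) hJ
      · exact hs
    have hRnt : Nontrivial R := ⟨1, 0, fun h => by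
      have h2 : (1 : S) = 0 := by
        have := congrArg f h; simpa using this
      exact one_ne_zero h2⟩
    -- extract equations from divisibility in the amalgamation
    have extract : ∀ (a : R) (j : S) (hj : j ∈ J) (b : R) (k : S) (hk : k ∈ J),
        (∃ z : amalgamation f J, amk f J b k hk = z * amk f J a j hj) →
        ∃ r : R, ∃ l ∈ J, b = r * a ∧ f b + k = (f r + l) * (f a + j) := by
      intro a j hj b k hk ⟨z, hz⟩
      obtain ⟨⟨r, s⟩, ⟨l, hl, (hzm : s = f r + l)⟩⟩ := z
      have h1 := congrArg (fun w : amalgamation f J => (w : R × S).1) hz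
      have h2 := congrArg (fun w : amalgamation f J => (w : R × S).2) hz
      simp only [amk, Subring.coe_mul, Prod.fst_mul, Prod.snd_mul] at h1 h2
      exact ⟨r, l, hl, h1, by rw [h2, hzm]⟩
    -- key fact: if a*b = 0 with a ≠ 0 (for the domain proof we only need a ≠ 0 to
    -- rule out one case), then f b kills J
    have key : ∀ a b : R, a ≠ 0 → a * b = 0 → ∀ k ∈ J, k * f b = 0 := by
      intro a b ha hab k hk
      rcases hdiv (amk f J a 0 J.zero_mem) (amk f J 0 k hk) with h | h
      · obtain ⟨r, l, hl, _, h2⟩ := extract a 0 J.zero_mem 0 k hk h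
        have : k = (f r + l) * f a := by simpa using h2
        calc k * f b = (f r + l) * f (a * b) := by rw [this, map_mul]; ring
          _ = 0 := by rw [hab, map_zero, mul_zero]
      · obtain ⟨r, l, hl, h1, _⟩ := extract 0 k hk a 0 J.zero_mem h
        exact absurd (by simpa using h1) ha
    -- R is a domain
    have hnzd : NoZeroDivisors R := by
      constructor
      intro a b hab
      by_cases ha : a = 0
      · exact Or.inl ha
      · right
        obtain ⟨k₀, hk₀J, hk₀⟩ := Submodule.ne_bot_iff J |>.1 hJ0
        rcases hdiv (amk f J b 0 J.zero_mem) (amk f J 0 k₀ hk₀J) with h | h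
        · obtain ⟨r, l, hl, h1, h2⟩ := extract b 0 J.zero_mem 0 k₀ hk₀J h
          -- 0 = r * b  and  k₀ = (f r + l) * f b
          exfalso
          apply hk₀
          have hrb : r * b = 0 := h1.symm
          have hk : k₀ = f r * f b + l * f b := by
            have : k₀ = (f r + l) * f b := by simpa using h2
            rw [this]; ring
          have hlb : l * f b = 0 := key a b ha hab l hl
          have hfrb : f r * f b = 0 := by rw [← map_mul, hrb, map_zero]
          rw [hk, hlb, hfrb, add_zero]
        · obtain ⟨r, l, hl, h1, _⟩ := extract 0 k₀ hk₀J b 0 J.zero_mem h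
          simpa using h1
    have hdom : IsDomain R := NoZeroDivisors.to_isDomain R
    -- R is a chain ring
    have hchainR : IsChainRing R := by
      rw [chain_iff_div]
      intro a b
      rcases hdiv (amk f J a 0 J.zero_mem) (amk f J b 0 J.zero_mem) with h | h
      · obtain ⟨r, l, hl, h1, _⟩ := extract a 0 J.zero_mem b 0 J.zero_mem h
        exact Or.inl ⟨r, h1⟩
      · obtain ⟨r, l, hl, h1, _⟩ := extract b 0 J.zero_mem a 0 J.zero_mem h
        exact Or.inr ⟨r, h1⟩
    refine ⟨⟨hdom, hchainR⟩, ?_⟩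
    intro a ha j hj
    apply le_antisymm
    · intro m hm
      obtain ⟨n, hn, rfl⟩ := (mem_smul_ideal_iff J _ m).1 hm
      exact J.mul_mem_left _ hn
    · intro k hk
      rw [mem_smul_ideal_iff]
      rcases hdiv (amk f J a j hj) (amk f J 0 k hk) with h | h
      · obtain ⟨r, l, hl, h1, h2⟩ := extract a j hj 0 k hk h
        have hr : r = 0 := by
          rcases mul_eq_zero.1 h1.symm with h' | h'
          · exact h'
          · exact absurd h' ha
        refine ⟨l, hl, ?_⟩
        rw [hr] at h2
        simpa [mul_comm] using h2.symm
      · obtain ⟨r, l, hl, h1, _⟩ := extract 0 k hk a j hj h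
        exact absurd (by simpa using h1) ha
  · intro huni ⟨hdom, hchainR⟩ hsmul
    letI : Module R J := Module.compHom J f
    rw [chain_iff_div]
    have hsmul_def : ∀ (r : R) (m : J), r • m = ⟨f r * (m : S), J.mul_mem_left _ m.2⟩ := by
      intro r m; rfl
    -- main step: if b = r * a with a ≠ 0, then (b, f b + k) is a multiple of (a, f a + j)
    have step : ∀ (a : R), a ≠ 0 → ∀ (j : S) (hj : j ∈ J) (b r : R), b = r * a →
        ∀ (k : S) (hk : k ∈ J),
        ∃ z, amk f J b k hk = z * amk f J a j hj := by
      intro a ha j hj b r hb k hk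
      have hmem : k - f r * j ∈ J := J.sub_mem hk (J.mul_mem_left _ hj)
      have : k - f r * j ∈ (f a + j) • J := by rw [hsmul a ha j hj]; exact hmem
      obtain ⟨l, hl, hleq⟩ := (mem_smul_ideal_iff J _ _).1 this
      refine ⟨amk f J r l hl, amk_eq_mul hl hj hk hb ?_⟩
      have : (f r + l) * (f a + j) = f (r * a) + (f r * j + (f a + j) * l) := by
        rw [map_mul]; ring
      rw [this, hleq, ← hb]; ring
    intro x y
    obtain ⟨⟨a, a'⟩, ⟨j, hj, (hx : a' = f a + j)⟩⟩ := x
    obtain ⟨⟨b, b'⟩, ⟨k, hk, (hy : b' = f b + k)⟩⟩ := y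
    subst hx; subst hy
    have hxeq : (⟨(a, f a + j), ⟨j, hj, rfl⟩⟩ : amalgamation f J) = amk f J a j hj := rfl
    have hyeq : (⟨(b, f b + k), ⟨k, hk, rfl⟩⟩ : amalgamation f J) = amk f J b k hk := rfl
    rw [hxeq, hyeq]
    by_cases ha : a = 0
    · by_cases hb : b = 0
      · -- both first components zero: use uniseriality of J
        subst ha; subst hb
        rcases huni (Submodule.span R {(⟨j, hj⟩ : J)}) (Submodule.span R {(⟨k, hk⟩ : J)})
            with h | h
        · -- j ∈ span{k}
          right
          obtain ⟨r, hr⟩ := Submodule.mem_span_singleton.1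
            (h (Submodule.mem_span_singleton_self _))
          rw [hsmul_def] at hr
          have hjk : f r * k = j := congrArg Subtype.val hr
          refine ⟨amk f J r 0 J.zero_mem, amk_eq_mul J.zero_mem hk hj (by ring) ?_⟩
          rw [← hjk, map_zero]; ring
        · left
          obtain ⟨r, hr⟩ := Submodule.mem_span_singleton.1
            (h (Submodule.mem_span_singleton_self _))
          rw [hsmul_def] at hr
          have hjk : f r * j = k := congrArg Subtype.val hr
          refine ⟨amk f J r 0 J.zero_mem, amk_eq_mul J.zero_mem hj hk (by ring) ?_⟩
          rw [← hjk, map_zero]; ring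
      · -- a = 0, b ≠ 0 : a = 0 * b
        exact Or.inr (step b hb k hk a 0 (by rw [ha]; ring) j hj)
    · rcases chain_iff_div.1 hchainR a b with ⟨r, hr⟩ | ⟨r, hr⟩
      · exact Or.inl (step a ha j hj b r hr k hk)
      · have hb : b ≠ 0 := fun h => ha (by rw [hr, h, mul_zero])
        exact Or.inr (step b hb k hk a r hr j hj)
end
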